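/- arXiv:0802.2184 — 9 statements merged into one kernel-verified Lean document; each statement's English description precedes it below -/
import Mathlib

section
/- Let φ' be a greedy cover of a set cover instance, with a'_v := |φ'⁻¹(φ'(v))|. Then for every real p ≥ 0 and every subset C ⊆ V that is contained in some member of 𝒮 (in particular, for every part of any cover), ∑_{v ∈ C} (a'_v)^p ≥ ∑_{j=1}^{|C|} j^p. -/
open Finset

/-- A set cover instance: a collection of subsets of a finite ground set `V` whose union is `V`. -/
structure SetCoverInstance (V : Type*) [Fintype V] [DecidableEq V] where
  sets : Finset (Finset V)
  covers : ∀ v : V, ∃ S ∈ sets, v ∈ S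

/-- A cover: an assignment of each element to a subset of the collection containing it. -/
structure Cover {V : Type*} [Fintype V] [DecidableEq V] (I : SetCoverInstance V) where
  φ : V → Finset V
  mem_sets : ∀ v, φ v ∈ I.sets
  self_mem : ∀ v, v ∈ φ v

variable {V : Type*} [Fintype V] [DecidableEq V] {I : SetCoverInstance V}

/-- `a_v`: the size of the part containing `v`. -/
def Cover.a (c : Cover I) (v : V) : ℕ :=
  (Finset.univ.filter fun w => c.φ w = c.φ v).card

/-- `c_i`: the size of the part assigned to subset `S`. -/
def Cover.partSize (c : Cover I) (S : Finset V) : ℕ :=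
  (Finset.univ.filter fun w => c.φ w = S).card

/-- A greedy cover: its parts can be ordered `P 0, …, P (m-1)` so that each `P j` is obtained by
choosing a subset covering a maximum number of yet-uncovered elements. -/
def Cover.IsGreedy (c : Cover I) : Prop :=
  ∃ (m : ℕ) (P : ℕ → Finset V),
    (∀ v : V, ∃ j < m, v ∈ P j) ∧
    (∀ j < m, ∃ S ∈ I.sets,
      P j = S \ (Finset.range j).biUnion P ∧
      ∀ T ∈ I.sets, (T \ (Finset.range j).biUnion P).card ≤ (P j).card) ∧
    (∀ j < m, ∀ v ∈ P j, (Finset.univ.filter fun w => c.φ w = c.φ v) = P j)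

/-- The generalized `p`-mean of the part sizes `a_v`, over the elements. -/
noncomputable def Cover.pMean (c : Cover I) (p : ℝ) : ℝ :=
  ((1 / (Fintype.card V : ℝ)) * ∑ v : V, (c.a v : ℝ) ^ p) ^ (1 / p)

/-!
Let `stage v` be the greedy step at which `v` is covered. If `C ⊆ S ∈ 𝒮` and `v ∈ C`, every
`w ∈ C` with `stage v ≤ stage w` is still uncovered at step `stage v`, so these elements lie in
what remains of `S` at that step, and greedy maximality bounds their number by `a'_v`. Removing
from `C` an element of minimal stage, which then has `a'_v ≥ |C|`, gives the inequality by
induction on `|C|`.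
-/

theorem Finset.sum_Icc_le_sum_of_card_filter_le {ι α β : Type*} [DecidableEq ι] [LinearOrder α]
    [AddCommMonoid β] [PartialOrder β] [IsOrderedAddMonoid β] {f : ℕ → β} (hf : Monotone f)
    (key : ι → α) (g : ι → ℕ) (s : Finset ι) (h : ∀ i ∈ s, #{j ∈ s | key i ≤ key j} ≤ g i) :
    ∑ n ∈ Icc 1 #s, f n ≤ ∑ i ∈ s, f (g i) := by
  induction s using Finset.induction_on_min_value key with
  | empty => simp
  | insert a s ha hmin ih =>
    have hfull : #{j ∈ insert a s | key a ≤ key j} = #s + 1 := by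
      rw [filter_true_of_mem (by simpa using hmin), card_insert_of_notMem ha]
    have hle : #s + 1 ≤ g a := hfull ▸ h a (mem_insert_self a s)
    have ih := ih fun i hi => (card_le_card (filter_subset_filter _ (subset_insert a s))).trans
      (h i (mem_insert_of_mem hi))
    rw [card_insert_of_notMem ha, sum_Icc_succ_top (by omega), sum_insert ha, add_comm (f (g a))]
    exact add_le_add ih (hf hle)

theorem Cover.IsGreedy.exists_stage {c : Cover I} (hc : c.IsGreedy) :
    ∃ stage : V → ℕ, ∀ S ∈ I.sets, ∀ v, #{w ∈ S | stage v ≤ stage w} ≤ c.a v := by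
  obtain ⟨m, P, hcov, hgreedy, hpart⟩ := hc
  have hex : ∀ v, ∃ j, v ∈ P j := fun v => (hcov v).imp fun _ => And.right
  refine ⟨fun v => Nat.find (hex v), fun S hS v => ?_⟩
  set j := Nat.find (hex v)
  obtain ⟨j₀, hj₀m, hvj₀⟩ := hcov v
  have hjm : j < m := (Nat.find_min' _ hvj₀).trans_lt hj₀m
  obtain ⟨-, -, -, hmax⟩ := hgreedy j hjm
  have huncovered : {w ∈ S | j ≤ Nat.find (hex w)} ⊆ S \ (range j).biUnion P := by
    intro w hw
    rw [mem_filter] at hw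
    rw [mem_sdiff, mem_biUnion]
    refine ⟨hw.1, ?_⟩
    rintro ⟨i, hi, hwi⟩
    exact Nat.find_min (hex w) ((mem_range.1 hi).trans_le hw.2) hwi
  calc #{w ∈ S | j ≤ Nat.find (hex w)}
      ≤ #(S \ (range j).biUnion P) := card_le_card huncovered
    _ ≤ #(P j) := hmax S hS
    _ = c.a v := by rw [Cover.a, hpart j hjm v (Nat.find_spec (hex v))]

/-- if `φ'` is a greedy cover, then for every `p ≥ 0` and every subset `C`
included in some member of the collection, `∑_{v ∈ C} (a'_v)^p ≥ ∑_{j=1}^{|C|} j^p`. -/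
theorem greedy_part_sum_lower_bound (c' : Cover I) (hc' : c'.IsGreedy)
    (p : ℝ) (hp : 0 ≤ p) (C : Finset V) (hC : ∃ S ∈ I.sets, C ⊆ S) :
    ∑ j ∈ Finset.Icc 1 C.card, (j : ℝ) ^ p ≤ ∑ v ∈ C, (c'.a v : ℝ) ^ p := by
  obtain ⟨S, hS, hCS⟩ := hC
  obtain ⟨stage, hstage⟩ := hc'.exists_stage
  have hmono : Monotone fun n : ℕ => (n : ℝ) ^ p := fun m n hmn =>
    Real.rpow_le_rpow m.cast_nonneg (Nat.cast_le.2 hmn) hp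
  exact sum_Icc_le_sum_of_card_filter_le hmono stage c'.a C fun v _ =>
    (card_le_card (filter_subset_filter _ hCS)).trans (hstage S hS v)
end

section
/- For every real q > 1 and p := −q, every greedy cover φ' of a set cover instance and every cover φ of the same instance satisfy M_{−q}(φ) ≤ n^{1−1/q} · ζ(q)^{1/q} · M_{−q}(φ'), where ζ(q) = ∑_{j=1}^{∞} j^{−q} is the Riemann zeta function. In other words, the greedy algorithm approximates the maximum (−q)-mean set cover problem within a factor of n^{1−1/q} ζ(q)^{1/q}. -/
/-!
Rank the elements by the greedy step that covers them. If `Q` is a part of an arbitrary cover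
and `v ∈ Q`, then `Q ⊆ φ v`, and the elements of `Q` ranked no earlier than `v` were all still
uncovered when the greedy algorithm chose the part of `v`; so that part has at least as many
elements. Hence the greedy part sizes on `Q` dominate `1, 2, …, |Q|`, and `Q` contributes at most
`ζ(q)` to `∑ a'_v^{-q}`, while it contributes `|Q|^{1-q} ≥ n^{1-q}` to `∑ a_v^{-q}`. Summing over
the parts, `∑ a'_v^{-q} ≤ n^{q-1} ζ(q) ∑ a_v^{-q}`, and taking `(-1/q)`-th powers of the averages
gives the claim.
-/

open Finset

variable {V : Type*} [Fintype V] [DecidableEq V] {I : SetCoverInstance V}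

noncomputable def Cover.powSum (c : Cover I) (p : ℝ) : ℝ :=
  ∑ v : V, (c.a v : ℝ) ^ p

lemma Cover.pMean_neg (c : Cover I) (q : ℝ) :
    c.pMean (-q) = (Fintype.card V / c.powSum (-q)) ^ (1 / q) := by
  have hS : 0 ≤ c.powSum (-q) :=
    Finset.sum_nonneg fun v _ => Real.rpow_nonneg (Nat.cast_nonneg _) _
  rw [Cover.pMean, ← Cover.powSum, div_neg, Real.rpow_neg (by positivity),
    ← Real.inv_rpow (by positivity), one_div_mul_eq_div, inv_div]

lemma Cover.one_le_a (c : Cover I) (v : V) : 1 ≤ c.a v :=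
  Finset.card_pos.mpr ⟨v, Finset.mem_filter.mpr ⟨Finset.mem_univ v, rfl⟩⟩

lemma Cover.powSum_pos [Nonempty V] (c : Cover I) (p : ℝ) : 0 < c.powSum p :=
  Finset.sum_pos (fun v _ => Real.rpow_pos_of_pos (by exact_mod_cast c.one_le_a v) _)
    Finset.univ_nonempty

lemma Cover.a_eq_card_part (c : Cover I) {S : Finset V} {v : V} (hv : c.φ v = S) :
    c.a v = #{w | c.φ w = S} := by
  rw [Cover.a, hv]

lemma Cover.part_subset (c : Cover I) {S : Finset V} {v : V} (hv : c.φ v = S) :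
    ({w | c.φ w = S} : Finset V) ⊆ c.φ v := by
  intro w hw
  simp only [Finset.mem_filter, Finset.mem_univ, true_and] at hw
  exact hv ▸ hw ▸ c.self_mem w

lemma Cover.IsGreedy.exists_rank {c : Cover I} (h : c.IsGreedy) :
    ∃ t : V → ℕ, ∀ T ∈ I.sets, ∀ v, #{w ∈ T | t v ≤ t w} ≤ c.a v := by
  obtain ⟨m, P, hcov, hstep, hpart⟩ := h
  choose t ht_lt ht_mem using hcov
  refine ⟨t, fun T hT v => ?_⟩
  obtain ⟨-, -, -, hmax⟩ := hstep (t v) (ht_lt v)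
  have hsub : {w ∈ T | t v ≤ t w} ⊆ T \ (range (t v)).biUnion P := by
    intro w hw
    obtain ⟨hwT, hvw⟩ := Finset.mem_filter.mp hw
    refine Finset.mem_sdiff.mpr ⟨hwT, fun hw' => ?_⟩
    obtain ⟨i, hi, hwi⟩ := Finset.mem_biUnion.mp hw'
    obtain ⟨S', -, hPS', -⟩ := hstep (t w) (ht_lt w)
    have hw_new := ht_mem w
    rw [hPS'] at hw_new
    exact (Finset.mem_sdiff.mp hw_new).2 <|
      Finset.mem_biUnion.mpr ⟨i, Finset.mem_range.mpr (by simp at hi; omega), hwi⟩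
  calc #{w ∈ T | t v ≤ t w} ≤ #(T \ (range (t v)).biUnion P) := Finset.card_le_card hsub
    _ ≤ #(P (t v)) := hmax T hT
    _ = c.a v := by rw [Cover.a, hpart (t v) (ht_lt v) v (ht_mem v)]

lemma sum_le_sum_range_of_card_rank_le {α β M : Type*} [DecidableEq α] [LinearOrder β]
    [AddCommMonoid M] [PartialOrder M] [IsOrderedAddMonoid M]
    {f : ℕ → M} (hf : AntitoneOn f (Set.Ici 1)) (t : α → β) (b : α → ℕ) (s : Finset α)
    (hb : ∀ v ∈ s, #{w ∈ s | t v ≤ t w} ≤ b v) :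
    ∑ v ∈ s, f (b v) ≤ ∑ j ∈ range #s, f (j + 1) := by
  induction s using Finset.induction_on_min_value t with
  | empty => simp
  | insert a s has hmin ih =>
    -- `a` has minimal rank, so all of `insert a s` is ranked at least as late as `a`
    have hrank : ∀ v ∈ s, #{w ∈ s | t v ≤ t w} ≤ #{w ∈ insert a s | t v ≤ t w} := fun v _ =>
      Finset.card_le_card (Finset.filter_subset_filter _ (Finset.subset_insert a s))
    have hfirst : #{w ∈ insert a s | t a ≤ t w} = #s + 1 := by
      rw [Finset.filter_true_of_mem fun w hw => ?_, Finset.card_insert_of_notMem has]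
      rcases Finset.mem_insert.mp hw with rfl | hw
      exacts [le_rfl, hmin w hw]
    rw [Finset.sum_insert has, Finset.card_insert_of_notMem has, Finset.sum_range_succ, add_comm]
    refine add_le_add (ih fun v hv => (hrank v hv).trans (hb v (Finset.mem_insert_of_mem hv))) ?_
    have hba : #s + 1 ≤ b a := hfirst ▸ hb a (Finset.mem_insert_self a s)
    exact hf (Set.mem_Ici.mpr (Nat.le_add_left 1 _)) (Set.mem_Ici.mpr (by omega)) hba

lemma antitoneOn_natCast_rpow_neg {q : ℝ} (hq : 0 ≤ q) :
    AntitoneOn (fun x : ℕ => (x : ℝ) ^ (-q)) (Set.Ici 1) := fun a ha _ _ hab =>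
  Real.rpow_le_rpow_of_nonpos (by exact_mod_cast Set.mem_Ici.mp ha) (by exact_mod_cast hab)
    (by linarith)

lemma summable_natCast_add_one_rpow_neg {q : ℝ} (hq : 1 < q) :
    Summable fun j : ℕ => ((j : ℝ) + 1) ^ (-q) := by
  have h := (summable_nat_add_iff 1).mpr (Real.summable_nat_rpow.mpr (by linarith : -q < -1))
  exact h.congr fun j => by push_cast; rfl

lemma Cover.IsGreedy.sum_part_rpow_neg_le {c' : Cover I} (hc' : c'.IsGreedy) (c : Cover I)
    {q : ℝ} (hq : 1 < q) (S : Finset V) :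
    ∑ v ∈ {w | c.φ w = S}, (c'.a v : ℝ) ^ (-q) ≤ ∑' j : ℕ, ((j : ℝ) + 1) ^ (-q) := by
  obtain ⟨t, ht⟩ := hc'.exists_rank
  calc ∑ v ∈ {w | c.φ w = S}, (c'.a v : ℝ) ^ (-q)
      ≤ ∑ j ∈ range #{w | c.φ w = S}, (((j + 1 : ℕ) : ℝ) ^ (-q)) := by
        refine sum_le_sum_range_of_card_rank_le (antitoneOn_natCast_rpow_neg (by linarith))
          t c'.a _ fun v hv => ?_
        have hvS : c.φ v = S := (Finset.mem_filter.mp hv).2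
        exact (Finset.card_le_card (Finset.filter_subset_filter _ (c.part_subset hvS))).trans
          (ht _ (c.mem_sets v) v)
    _ ≤ ∑' j : ℕ, ((j : ℝ) + 1) ^ (-q) := by
        push_cast
        exact (summable_natCast_add_one_rpow_neg hq).sum_le_tsum _
          fun j _ => Real.rpow_nonneg (by positivity) _

lemma one_le_rpow_sub_one_mul_mul_rpow_neg {k n q : ℝ} (hk : 0 < k) (hkn : k ≤ n) (hq : 1 ≤ q) :
    1 ≤ n ^ (q - 1) * (k * k ^ (-q)) := by
  have hk' : k * k ^ (-q) = (k ^ (q - 1))⁻¹ := by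
    rw [← Real.rpow_neg hk.le, neg_sub, sub_eq_add_neg, Real.rpow_add hk, Real.rpow_one]
  rw [hk', ← div_eq_mul_inv, one_le_div (Real.rpow_pos_of_pos hk _)]
  exact Real.rpow_le_rpow hk.le hkn (by linarith)

lemma Cover.IsGreedy.powSum_neg_le {c' : Cover I} (hc' : c'.IsGreedy) (c : Cover I)
    {q : ℝ} (hq : 1 < q) :
    c'.powSum (-q) ≤
      (Fintype.card V : ℝ) ^ (q - 1) * (∑' j : ℕ, ((j : ℝ) + 1) ^ (-q)) * c.powSum (-q) := by
  set Z := ∑' j : ℕ, ((j : ℝ) + 1) ^ (-q)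
  have hZ : 0 ≤ Z := tsum_nonneg fun j => Real.rpow_nonneg (by positivity) _
  rw [Cover.powSum, Cover.powSum, ← Finset.sum_fiberwise univ c.φ, ← Finset.sum_fiberwise univ c.φ,
    Finset.mul_sum]
  refine Finset.sum_le_sum fun S _ => ?_
  rcases Finset.eq_empty_or_nonempty {w | c.φ w = S} with hQ | hQ
  · simp [hQ]
  have hpart : ∑ v ∈ {w | c.φ w = S}, (c.a v : ℝ) ^ (-q) =
      #{w | c.φ w = S} * (#{w | c.φ w = S} : ℝ) ^ (-q) := by
    rw [Finset.sum_congr rfl fun v hv => by rw [c.a_eq_card_part (Finset.mem_filter.mp hv).2],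
      Finset.sum_const, nsmul_eq_mul]
  calc ∑ v ∈ {w | c.φ w = S}, (c'.a v : ℝ) ^ (-q) ≤ Z := hc'.sum_part_rpow_neg_le c hq S
    _ ≤ Z * ((Fintype.card V : ℝ) ^ (q - 1) * (#{w | c.φ w = S} * (#{w | c.φ w = S} : ℝ) ^ (-q))) :=
        le_mul_of_one_le_right hZ <| one_le_rpow_sub_one_mul_mul_rpow_neg
          (by exact_mod_cast hQ.card_pos) (by exact_mod_cast Finset.card_le_univ _) hq.le
    _ = _ := by rw [hpart]; ring

lemma div_rpow_inv_le_of_le_mul {n A B K q : ℝ} (hn : 0 ≤ n) (hB : 0 < B) (hK : 0 ≤ K)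
    (hq : 0 < q) (h : B ≤ K * A) :
    (n / A) ^ (1 / q) ≤ K ^ (1 / q) * (n / B) ^ (1 / q) := by
  have hA : 0 < A := pos_of_mul_pos_right (hB.trans_le h) hK
  rw [← Real.mul_rpow hK (by positivity)]
  refine Real.rpow_le_rpow (by positivity) ?_ (by positivity)
  rw [mul_div_assoc', div_le_div_iff₀ hA hB]
  nlinarith [mul_le_mul_of_nonneg_left h hn]

/-- for every real `q > 1`, every greedy cover `c'` and every cover `c`,
`M_{-q}(c) ≤ n^{1-1/q} · ζ(q)^{1/q} · M_{-q}(c')`, where `ζ(q) = ∑_{j=1}^∞ j^{-q}`. -/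
theorem greedy_negMean_approx (q : ℝ) (hq : 1 < q)
    (c' : Cover I) (hc' : c'.IsGreedy) (c : Cover I) :
    c.pMean (-q) ≤
      (Fintype.card V : ℝ) ^ (1 - 1 / q) *
        (∑' j : ℕ, ((j : ℝ) + 1) ^ (-q)) ^ (1 / q) * c'.pMean (-q) := by
  have hq0 : 0 < q := one_pos.trans hq
  rcases isEmpty_or_nonempty V with hV | hV
  · simp [Cover.pMean_neg, hq0.ne']
  have hZ : 0 ≤ ∑' j : ℕ, ((j : ℝ) + 1) ^ (-q) :=
    tsum_nonneg fun j => Real.rpow_nonneg (by positivity) _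
  have hn : (0 : ℝ) ≤ Fintype.card V := Nat.cast_nonneg _
  rw [c.pMean_neg, c'.pMean_neg, show 1 - 1 / q = (q - 1) * (1 / q) by field_simp,
    Real.rpow_mul hn, ← Real.mul_rpow (Real.rpow_nonneg hn _) hZ]
  exact div_rpow_inv_le_of_le_mul hn (c'.powSum_pos _) (by positivity) hq0
    (hc'.powSum_neg_le c hq)
end

section
/- For p = −2, every greedy cover φ' of a set cover instance and every cover φ of the same instance satisfy M_{−2}(φ) ≤ π √(n/6) · M_{−2}(φ'); that is, the greedy algorithm approximates the maximum (−2)-mean set cover problem within a factor of π √(n/6). -/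
open Finset

variable {V : Type*} [Fintype V] [DecidableEq V] {I : SetCoverInstance V}

/-!
Write `a'_v` for the part sizes of the greedy cover. Inside any set `S` of the instance, at most `t`
elements have `a'_v ≤ t`: at the step the first of them is covered, all of them are still
uncovered, so the greedy part chosen then has more than `t` elements. Hence the values `a'_v`,
`v ∈ S`, dominate `1, 2, 3, …` and `∑_{v ∈ S} a'_v⁻² ≤ ∑ i⁻² ≤ π²/6`. Summing over the `k` parts of
`φ` gives `∑_v a'_v⁻² ≤ k π²/6`, while `∑_v a_v⁻² = ∑_parts 1/|part| ≥ k/n`. Comparing the two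
sums is exactly the claimed inequality between the `(-2)`-means.
-/

open Real

theorem Finset.sum_le_sum_range_of_card_filter_le {α M : Type*} [DecidableEq α]
    [AddCommMonoid M] [PartialOrder M] [IsOrderedAddMonoid M] {f : ℕ → M}
    (hf : AntitoneOn f (Set.Ici 1)) (b : α → ℕ) (Q : Finset α)
    (hb : ∀ t, #{v ∈ Q | b v ≤ t} ≤ t) :
    ∑ v ∈ Q, f (b v) ≤ ∑ i ∈ range #Q, f (i + 1) := by
  induction Q using Finset.induction_on_max_value b with
  | empty => simp
  | insert a s ha hmax ih =>
    have hcard : #s + 1 ≤ b a := by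
      calc #s + 1 = #(insert a s) := (card_insert_of_notMem ha).symm
        _ = #{v ∈ insert a s | b v ≤ b a} := by
          rw [filter_true_of_mem (by simpa using hmax)]
        _ ≤ b a := hb (b a)
    have hs := ih fun t => (card_le_card (filter_subset_filter _ (subset_insert a s))).trans (hb t)
    rw [sum_insert ha, card_insert_of_notMem ha, sum_range_succ, add_comm]
    exact add_le_add hs (hf (by simp) (by simp; omega) hcard)

theorem sum_range_inv_succ_sq_le_pi_sq_div_six (N : ℕ) :
    ∑ i ∈ range N, (((i + 1 : ℕ) : ℝ) ^ 2)⁻¹ ≤ π ^ 2 / 6 := by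
  have h := sum_le_hasSum (range (N + 1)) (fun i _ => by positivity) hasSum_zeta_two
  simpa [sum_range_succ'] using h

theorem inv_sqrt_le_mul_inv_sqrt {x y C : ℝ} (hy : 0 < y) (hC : 0 ≤ C) (h : y ≤ C ^ 2 * x) :
    (√x)⁻¹ ≤ C * (√y)⁻¹ := by
  have hCx : 0 < C * √x := by
    rw [← sqrt_sq hC, ← sqrt_mul (sq_nonneg C)]
    exact sqrt_pos.2 (hy.trans_le h)
  have hsqrt : √y ≤ C * √x := by
    rw [← sqrt_sq hC, ← sqrt_mul (sq_nonneg C)]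
    exact sqrt_le_sqrt h
  calc (√x)⁻¹ = C * (C * √x)⁻¹ := by
        rw [mul_inv, ← mul_assoc, mul_inv_cancel₀ (left_ne_zero_of_mul hCx.ne'), one_mul]
    _ ≤ C * (√y)⁻¹ := mul_le_mul_of_nonneg_left (inv_anti₀ (sqrt_pos.2 hy) hsqrt) hC

namespace Cover

theorem a_pos (c : Cover I) (v : V) : 0 < c.a v :=
  card_pos.2 ⟨v, mem_filter.2 ⟨mem_univ v, rfl⟩⟩

theorem pMean_neg_two (c : Cover I) :
    c.pMean (-2) = (√(1 / (Fintype.card V : ℝ) * ∑ v, ((c.a v : ℝ) ^ 2)⁻¹))⁻¹ := by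
  have hpow (x : ℝ) (hx : 0 ≤ x) : x ^ (-2 : ℝ) = (x ^ 2)⁻¹ := by
    rw [rpow_neg hx, ← rpow_natCast]; norm_num
  rw [pMean, sqrt_eq_rpow, ← rpow_neg (by positivity),
    sum_congr rfl fun v _ => hpow _ (by positivity)]
  norm_num

theorem sum_inv_sq_a (c : Cover I) :
    ∑ v, ((c.a v : ℝ) ^ 2)⁻¹ = ∑ S ∈ univ.image c.φ, (c.partSize S : ℝ)⁻¹ := by
  change ∑ v, ((c.partSize (c.φ v) : ℝ) ^ 2)⁻¹ = _
  rw [sum_comp (fun S => ((c.partSize S : ℝ) ^ 2)⁻¹) c.φ]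
  refine sum_congr rfl fun S hS => ?_
  have hpos : (0 : ℝ) < c.partSize S := by
    obtain ⟨v, -, rfl⟩ := mem_image.1 hS
    exact_mod_cast c.a_pos v
  change c.partSize S • _ = _
  rw [nsmul_eq_mul]
  field_simp

theorem card_image_div_le_sum_inv_sq_a (c : Cover I) :
    (#(univ.image c.φ) : ℝ) / Fintype.card V ≤ ∑ v, ((c.a v : ℝ) ^ 2)⁻¹ := by
  rw [sum_inv_sq_a, div_eq_mul_one_div, ← nsmul_eq_mul]
  refine card_nsmul_le_sum _ _ _ fun S hS => ?_
  obtain ⟨v, -, rfl⟩ := mem_image.1 hS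
  rw [one_div]
  exact inv_anti₀ (by exact_mod_cast c.a_pos v) (by exact_mod_cast card_le_univ _)

theorem IsGreedy.card_filter_a_le {c' : Cover I} (hc' : c'.IsGreedy) {S : Finset V}
    (hS : S ∈ I.sets) (t : ℕ) : #{v ∈ S | c'.a v ≤ t} ≤ t := by
  classical
  obtain ⟨m, P, hcov, hstep, hpart⟩ := hc'
  set F := ({v ∈ S | c'.a v ≤ t} : Finset V)
  rcases F.eq_empty_or_nonempty with hF | ⟨v, hv⟩
  · rw [hF, card_empty]
    exact t.zero_le
  have hex : ∃ j, j < m ∧ ∃ v ∈ F, v ∈ P j := by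
    obtain ⟨j, hj, hvj⟩ := hcov v
    exact ⟨j, hj, v, hv, hvj⟩
  obtain ⟨hj₀, v₀, hv₀, hv₀P⟩ := Nat.find_spec hex
  set j₀ := Nat.find hex
  have hF_uncovered : F ⊆ S \ (range j₀).biUnion P := by
    intro w hw
    simp only [mem_sdiff, mem_biUnion, mem_range, not_exists, not_and]
    exact ⟨(mem_filter.1 hw).1, fun j hj hwj =>
      Nat.find_min hex hj ⟨hj.trans hj₀, w, hw, hwj⟩⟩
  obtain ⟨-, -, -, hgreedy⟩ := hstep j₀ hj₀
  calc #F ≤ #(S \ (range j₀).biUnion P) := card_le_card hF_uncovered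
    _ ≤ #(P j₀) := hgreedy S hS
    _ = c'.a v₀ := (congrArg card (hpart j₀ hj₀ v₀ hv₀P)).symm
    _ ≤ t := (mem_filter.1 hv₀).2

theorem IsGreedy.sum_inv_sq_a_le_of_mem {c' : Cover I} (hc' : c'.IsGreedy) {S : Finset V}
    (hS : S ∈ I.sets) : ∑ v ∈ S, ((c'.a v : ℝ) ^ 2)⁻¹ ≤ π ^ 2 / 6 := by
  have hf : AntitoneOn (fun i : ℕ => ((i : ℝ) ^ 2)⁻¹) (Set.Ici 1) := fun i hi j _ hij => by
    have hi : (1 : ℝ) ≤ i := by exact_mod_cast hi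
    have hij : (i : ℝ) ≤ j := by exact_mod_cast hij
    exact inv_anti₀ (by positivity) (pow_le_pow_left₀ (by positivity) hij 2)
  exact (sum_le_sum_range_of_card_filter_le hf c'.a S (hc'.card_filter_a_le hS)).trans
    (sum_range_inv_succ_sq_le_pi_sq_div_six _)

theorem IsGreedy.sum_inv_sq_a_le {c' : Cover I} (hc' : c'.IsGreedy) (c : Cover I) :
    ∑ v, ((c'.a v : ℝ) ^ 2)⁻¹ ≤ #(univ.image c.φ) * (π ^ 2 / 6) := by
  rw [← sum_fiberwise_of_maps_to fun v _ => mem_image_of_mem c.φ (mem_univ v), ← nsmul_eq_mul]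
  refine sum_le_card_nsmul _ _ _ fun S hS => ?_
  obtain ⟨v, -, rfl⟩ := mem_image.1 hS
  have hsub : ({w | c.φ w = c.φ v} : Finset V) ⊆ c.φ v := fun w hw =>
    (mem_filter.1 hw).2 ▸ c.self_mem w
  exact (sum_le_sum_of_subset_of_nonneg hsub fun _ _ _ => by positivity).trans
    (hc'.sum_inv_sq_a_le_of_mem (c.mem_sets v))

end Cover

/-- every greedy cover `c'` and every cover `c` satisfy
`M_{-2}(c) ≤ π √(n/6) · M_{-2}(c')`. -/
theorem greedy_negTwoMean_approx (c' : Cover I) (hc' : c'.IsGreedy) (c : Cover I) :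
    c.pMean (-2) ≤ Real.pi * Real.sqrt ((Fintype.card V : ℝ) / 6) * c'.pMean (-2) := by
  cases isEmpty_or_nonempty V
  · simp [Cover.pMean]
  set n := (Fintype.card V : ℝ)
  have hn : 0 < n := Nat.cast_pos.2 Fintype.card_pos
  have hgreedy := hc'.sum_inv_sq_a_le c
  have hparts := c.card_image_div_le_sum_inv_sq_a
  rw [c.pMean_neg_two, c'.pMean_neg_two]
  refine inv_sqrt_le_mul_inv_sqrt ?_ (by positivity) ?_
  · have hpos (v : V) : (0 : ℝ) < ((c'.a v : ℝ) ^ 2)⁻¹ := by have := c'.a_pos v; positivity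
    exact mul_pos (by positivity) (sum_pos (fun v _ => hpos v) univ_nonempty)
  rw [mul_pow, sq_sqrt (by positivity)]
  calc 1 / n * ∑ v, ((c'.a v : ℝ) ^ 2)⁻¹
      ≤ 1 / n * (#(univ.image c.φ) * (π ^ 2 / 6)) := by gcongr
    _ = π ^ 2 * (n / 6) * (1 / n * (#(univ.image c.φ) / n)) := by field_simp
    _ ≤ π ^ 2 * (n / 6) * (1 / n * ∑ v, ((c.a v : ℝ) ^ 2)⁻¹) := by gcongr
end

section
/- Let f : ℕ → ℝ satisfy f(0) = 0, f(c) > 0 for all c ≥ 1, and be concave in the sense that f(j+1) − f(j) is nonincreasing in j. Then for every greedy cover φ' of a set cover instance and every cover φ of the same instance, the cost of φ' satisfies ∑_i f(c'_i) ≤ R · ∑_i f(c_i), where c'_i and c_i are the part sizes of φ' and φ respectively, and R := max { (1/f(c)) ∑_{j=1}^{c} f(j)/j : 1 ≤ c ≤ max_i |S_i| }. In other words, the greedy algorithm approximates the set cover problem with concave cost f within the factor R. -/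
open Finset

variable {V : Type*} [Fintype V] [DecidableEq V] {I : SetCoverInstance V}

/-!
Charge each element `v` the price `f (a' v) / a' v`, so that the greedy cost is the total price.
Concavity and `f 0 = 0` make `f n / n` nonincreasing. Fix a part `Q` of the other cover, contained
in some `S`. When the greedy algorithm covers `v ∈ Q`, all the elements of `Q` covered at that step
or later are still uncovered in `S`, so the greedy part of `v` is at least as large as their
number `r`, and the price of `v` is at most `f r / r`. These numbers `r` are at least `1, …, |Q|`
in some order, so `Q` pays at most `∑_{r ≤ |Q|} f r / r ≤ R · f |Q|`.
-/

theorem antitoneOn_div_of_antitone_sub {f : ℕ → ℝ} (hf0 : f 0 = 0)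
    (hconc : Antitone fun j => f (j + 1) - f j) :
    AntitoneOn (fun n : ℕ => f n / n) (Set.Ici 1) := by
  refine antitoneOn_nat_Ici_of_succ_le fun n hn => ?_
  have hlast : (n : ℝ) * (f (n + 1) - f n) ≤ f n :=
    calc (n : ℝ) * (f (n + 1) - f n) = ∑ _j ∈ range n, (f (n + 1) - f n) := by
          rw [sum_const, card_range, nsmul_eq_mul]
      _ ≤ ∑ j ∈ range n, (f (j + 1) - f j) :=
          sum_le_sum fun j hj => hconc (mem_range.mp hj).le
      _ = f n := by rw [sum_range_sub f, hf0, sub_zero]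
  have hn : (0 : ℝ) < n := by exact_mod_cast hn
  rw [div_le_div_iff₀ (by positivity) hn]
  push_cast
  linarith

theorem sum_rank_le_sum_Icc {α β : Type*} [DecidableEq α] [LinearOrder β] {g : ℕ → ℝ}
    (hg : AntitoneOn g (Set.Ici 1)) (key : α → β) (Q : Finset α) :
    ∑ v ∈ Q, g #{w ∈ Q | key v ≤ key w} ≤ ∑ t ∈ Icc 1 #Q, g t := by
  induction Q using Finset.induction_on_min_value key with
  | empty => simp
  | insert a Q haQ hmin ih =>
    have hpos : ∀ s : Finset α, ∀ v ∈ s, #{w ∈ s | key v ≤ key w} ∈ Set.Ici 1 := fun s v hv =>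
      card_pos.mpr ⟨v, mem_filter.mpr ⟨hv, le_rfl⟩⟩
    have hrank_a : #{w ∈ insert a Q | key a ≤ key w} = #Q + 1 := by
      rw [filter_true_of_mem fun w hw => ?_, card_insert_of_notMem haQ]
      rcases mem_insert.mp hw with rfl | hw
      exacts [le_rfl, hmin w hw]
    have hrank_le : ∀ v ∈ Q,
        g #{w ∈ insert a Q | key v ≤ key w} ≤ g #{w ∈ Q | key v ≤ key w} := fun v hv =>
      hg (hpos Q v hv) (hpos _ v (mem_insert_of_mem hv))
        (card_le_card (filter_subset_filter _ (subset_insert a Q)))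
    rw [sum_insert haQ, hrank_a, card_insert_of_notMem haQ, sum_Icc_succ_top (by omega), add_comm]
    exact add_le_add_left ((sum_le_sum hrank_le).trans ih) _

theorem sum_Icc_div_le_sup'_mul {f : ℕ → ℝ} (hf0 : f 0 = 0) (hfpos : ∀ m : ℕ, 1 ≤ m → 0 < f m)
    {M : ℕ} (hne : (Icc 1 M).Nonempty) {n : ℕ} (hn : n ≤ M) :
    ∑ t ∈ Icc 1 n, f t / t ≤
      (Icc 1 M).sup' hne (fun m => (1 / f m) * ∑ j ∈ Icc 1 m, f j / (j : ℝ)) * f n := by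
  rcases Nat.eq_zero_or_pos n with rfl | hn1
  · simp [hf0]
  have hle := le_sup' (fun m => (1 / f m) * ∑ j ∈ Icc 1 m, f j / (j : ℝ))
    (mem_Icc.mpr ⟨hn1, hn⟩)
  calc ∑ t ∈ Icc 1 n, f t / t = (1 / f n) * (∑ j ∈ Icc 1 n, f j / (j : ℝ)) * f n := by
        field_simp [(hfpos n hn1).ne']
    _ ≤ _ := mul_le_mul_of_nonneg_right hle (hfpos n hn1).le

namespace Cover

theorem fiber_subset (c : Cover I) (S : Finset V) : ({w | c.φ w = S} : Finset V) ⊆ S :=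
  fun w hw => (mem_filter.mp hw).2 ▸ c.self_mem w

theorem sum_partSize_eq_sum_div (c : Cover I) {f : ℕ → ℝ} (hf0 : f 0 = 0) :
    ∑ S ∈ I.sets, f (c.partSize S) = ∑ v, f (c.a v) / c.a v := by
  rw [← sum_fiberwise_of_maps_to fun v _ => c.mem_sets v]
  refine sum_congr rfl fun S _ => ?_
  have ha : ∀ v ∈ ({w | c.φ w = S} : Finset V), c.a v = c.partSize S := fun v hv => by
    rw [Cover.a, (mem_filter.mp hv).2, Cover.partSize]
  rw [sum_congr rfl fun v hv => by rw [ha v hv], sum_const, nsmul_eq_mul]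
  by_cases h0 : c.partSize S = 0
  · simp [h0, hf0]
  · rw [Cover.partSize] at h0 ⊢
    field_simp

theorem IsGreedy.exists_step {c : Cover I} (hc : c.IsGreedy) :
    ∃ step : V → ℕ, ∀ S ∈ I.sets, ∀ v, #{w ∈ S | step v ≤ step w} ≤ c.a v := by
  classical
  obtain ⟨m, P, hcov, hgreedy, hparts⟩ := hc
  refine ⟨fun v => Nat.find (hcov v), fun S hS v => ?_⟩
  obtain ⟨hstep, hvP⟩ := Nat.find_spec (hcov v)
  obtain ⟨-, -, -, hmax⟩ := hgreedy _ hstep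
  rw [Cover.a, hparts _ hstep v hvP]
  refine (card_le_card fun w hw => ?_).trans (hmax S hS)
  obtain ⟨hwS, hle⟩ := mem_filter.mp hw
  refine mem_sdiff.mpr ⟨hwS, fun hcovered => ?_⟩
  obtain ⟨j, hj, hwP⟩ := mem_biUnion.mp hcovered
  have hjw : j < Nat.find (hcov w) := (mem_range.mp hj).trans_le hle
  exact Nat.find_min (hcov w) hjw ⟨hjw.trans (Nat.find_spec (hcov w)).1, hwP⟩

theorem IsGreedy.sum_div_le_sum_Icc {c : Cover I} (hc : c.IsGreedy) {f : ℕ → ℝ}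
    (hf : AntitoneOn (fun n : ℕ => f n / n) (Set.Ici 1)) {S : Finset V} (hS : S ∈ I.sets)
    {Q : Finset V} (hQS : Q ⊆ S) :
    ∑ v ∈ Q, f (c.a v) / c.a v ≤ ∑ t ∈ Icc 1 #Q, f t / t := by
  obtain ⟨step, hstep⟩ := hc.exists_step
  refine (sum_le_sum fun v hv => ?_).trans (sum_rank_le_sum_Icc hf step Q)
  have hrank : #{w ∈ Q | step v ≤ step w} ≤ #{w ∈ S | step v ≤ step w} :=
    card_le_card (filter_subset_filter _ hQS)
  have hpos : 0 < #{w ∈ Q | step v ≤ step w} := card_pos.mpr ⟨v, mem_filter.mpr ⟨hv, le_rfl⟩⟩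
  exact hf hpos (hpos.trans_le (hrank.trans (hstep S hS v))) (hrank.trans (hstep S hS v))

end Cover

/-- for a concave cost function `f` with `f 0 = 0` and `f c > 0` for `c ≥ 1`,
every greedy cover `c'` and every cover `c` satisfy `∑ f(c'_i) ≤ R · ∑ f(c_i)`, where
`R = max { (1/f(m)) ∑_{j=1}^m f(j)/j : 1 ≤ m ≤ max_i |S_i| }`. -/
theorem greedy_generalCost_approx (f : ℕ → ℝ) (hf0 : f 0 = 0)
    (hfpos : ∀ m : ℕ, 1 ≤ m → 0 < f m)
    (hconc : ∀ j : ℕ, f (j + 2) - f (j + 1) ≤ f (j + 1) - f j)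
    (c' : Cover I) (hc' : c'.IsGreedy) (c : Cover I)
    (hne : (Finset.Icc 1 (I.sets.sup Finset.card)).Nonempty) :
    ∑ S ∈ I.sets, f (c'.partSize S) ≤
      ((Finset.Icc 1 (I.sets.sup Finset.card)).sup' hne fun m =>
          (1 / f m) * ∑ j ∈ Finset.Icc 1 m, f j / (j : ℝ)) *
        ∑ S ∈ I.sets, f (c.partSize S) := by
  have hratio := antitoneOn_div_of_antitone_sub hf0 (antitone_nat_of_succ_le hconc)
  rw [c'.sum_partSize_eq_sum_div hf0, ← sum_fiberwise_of_maps_to fun v _ => c.mem_sets v,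
    mul_sum]
  refine sum_le_sum fun S hS => ?_
  calc ∑ v ∈ {w | c.φ w = S}, f (c'.a v) / c'.a v
      ≤ ∑ t ∈ Icc 1 (c.partSize S), f t / t :=
        hc'.sum_div_le_sum_Icc hratio hS (c.fiber_subset S)
    _ ≤ _ := sum_Icc_div_le_sup'_mul hf0 hfpos hne
        ((card_le_card (c.fiber_subset S)).trans (le_sup hS))
end

section
/- Let n and t be natural numbers with 1 ≤ t ≤ n, and define the Rent-or-Buy cost function f : ℕ → ℝ by f(c) = c/t for 0 ≤ c ≤ t and f(c) = 1 for c > t. Then for every c with 1 ≤ c ≤ n, (1/f(c)) ∑_{j=1}^{c} f(j)/j ≤ 1 + ln(n/t). -/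
/-!
Below the breakpoint every term `f j / j` equals `1 / t`, so for `c ≤ t` the sum is exactly
`f c` and the ratio is at most `1`. Beyond it, the first `t` terms add up to `1` and the
remaining ones form the harmonic tail `∑_{t < j ≤ c} 1 / j`, which an integral comparison with
`∫_t^c dx / x` bounds by `log (c / t) ≤ log (n / t)`.
-/

open Finset Real

noncomputable def rentOrBuyCost (t m : ℕ) : ℝ := if m ≤ t then (m : ℝ) / t else 1

lemma rentOrBuyCost_of_le {t m : ℕ} (h : m ≤ t) : rentOrBuyCost t m = (m : ℝ) / t := if_pos h

lemma rentOrBuyCost_of_lt {t m : ℕ} (h : t < m) : rentOrBuyCost t m = 1 := if_neg h.not_ge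

lemma sum_Icc_rentOrBuyCost_div_of_le {t c : ℕ} (hct : c ≤ t) :
    ∑ j ∈ Icc 1 c, rentOrBuyCost t j / j = rentOrBuyCost t c := by
  have hterm : ∀ j ∈ Icc 1 c, rentOrBuyCost t j / j = (t : ℝ)⁻¹ := by
    intro j hj
    obtain ⟨hj1, hjc⟩ := mem_Icc.mp hj
    rw [rentOrBuyCost_of_le (hjc.trans hct), div_div_cancel_left' (by positivity)]
  rw [sum_congr rfl hterm, sum_const, Nat.card_Icc, nsmul_eq_mul, rentOrBuyCost_of_le hct,
    Nat.add_sub_cancel, div_eq_mul_inv]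

lemma sum_Icc_rentOrBuyCost_div_of_ge {t c : ℕ} (ht : 0 < t) (htc : t ≤ c) :
    ∑ j ∈ Icc 1 c, rentOrBuyCost t j / j = 1 + ∑ j ∈ Ioc t c, (j : ℝ)⁻¹ := by
  have hhead : ∑ j ∈ Ioc 0 t, rentOrBuyCost t j / j = 1 := by
    rw [← Icc_add_one_left_eq_Ioc, zero_add, sum_Icc_rentOrBuyCost_div_of_le le_rfl,
      rentOrBuyCost_of_le le_rfl, div_self (by positivity)]
  have htail : ∑ j ∈ Ioc t c, rentOrBuyCost t j / j = ∑ j ∈ Ioc t c, (j : ℝ)⁻¹ := by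
    refine sum_congr rfl fun j hj => ?_
    rw [rentOrBuyCost_of_lt (mem_Ioc.mp hj).1, one_div]
  rw [← hhead, ← htail, sum_Ioc_consecutive _ (Nat.zero_le t) htc, ← Icc_add_one_left_eq_Ioc,
    zero_add]

lemma sum_Ioc_inv_le_log_div {t c : ℕ} (ht : 0 < t) (htc : t ≤ c) :
    ∑ j ∈ Ioc t c, (j : ℝ)⁻¹ ≤ log (c / t) := by
  have ht' : (0 : ℝ) < t := by exact_mod_cast ht
  have hzero : (0 : ℝ) ∉ Set.uIcc (t : ℝ) c := by
    rw [Set.uIcc_of_le (by exact_mod_cast htc)]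
    exact fun h => ht'.not_ge h.1
  calc ∑ j ∈ Ioc t c, (j : ℝ)⁻¹ = ∑ i ∈ Ico t c, ((i + 1 : ℕ) : ℝ)⁻¹ := by
        rw [← Ico_add_one_add_one_eq_Ioc, ← sum_Ico_add']
    _ ≤ ∫ x in (t : ℝ)..c, x⁻¹ := (inv_antitoneOn_Icc_right ht').sum_le_integral_Ico htc
    _ = log (c / t) := integral_inv hzero

theorem rentOrBuy_ratio_bound_general (n t : ℕ) (ht : 1 ≤ t) (htn : t ≤ n)
    (f : ℕ → ℝ) (hf : ∀ m : ℕ, f m = if m ≤ t then (m : ℝ) / t else 1)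
    (c : ℕ) (hcn : c ≤ n) :
    (1 / f c) * ∑ j ∈ Finset.Icc 1 c, f j / (j : ℝ)
      ≤ 1 + Real.log ((n : ℝ) / t) := by
  obtain rfl : f = rentOrBuyCost t := funext hf
  have ht' : (0 : ℝ) < t := by exact_mod_cast ht
  rcases le_or_gt c t with hct | htc
  · have hlog : 0 ≤ log ((n : ℝ) / t) :=
      log_nonneg ((one_le_div ht').mpr (by exact_mod_cast htn))
    rw [sum_Icc_rentOrBuyCost_div_of_le hct, one_div]
    exact inv_mul_le_one.trans (le_add_of_nonneg_right hlog)
  · rw [rentOrBuyCost_of_lt htc, div_one, one_mul, sum_Icc_rentOrBuyCost_div_of_ge ht htc.le]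
    gcongr
    calc ∑ j ∈ Ioc t c, (j : ℝ)⁻¹ ≤ log ((c : ℝ) / t) := sum_Ioc_inv_le_log_div ht htc.le
      _ ≤ log ((n : ℝ) / t) := by
        have hc' : (0 : ℝ) < c := by exact_mod_cast Nat.zero_lt_of_lt htc
        gcongr

/-- for the Rent-or-Buy cost function with breakpoint `t` out of `n`
(`f c = c/t` for `c ≤ t`, `f c = 1` otherwise), for every `1 ≤ c ≤ n` we have
`(1/f(c)) ∑_{j=1}^c f(j)/j ≤ 1 + ln(n/t)`. -/
theorem rentOrBuy_ratio_bound (n t : ℕ) (ht : 1 ≤ t) (htn : t ≤ n)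
    (f : ℕ → ℝ) (hf : ∀ m : ℕ, f m = if m ≤ t then (m : ℝ) / t else 1)
    (c : ℕ) (hc1 : 1 ≤ c) (hcn : c ≤ n) :
    (1 / f c) * ∑ j ∈ Finset.Icc 1 c, f j / (j : ℝ)
      ≤ 1 + Real.log ((n : ℝ) / t) :=
  rentOrBuy_ratio_bound_general n t ht htn f hf c hcn
end

section
/- Let n and t be natural numbers with 1 ≤ t ≤ n, set β := t/n, and define the Rent-or-Buy cost function f : ℕ → ℝ by f(c) = c/t for 0 ≤ c ≤ t and f(c) = 1 for c > t. Then for every greedy cover φ' of a set cover instance on a ground set of size n and every cover φ of the same instance, ∑_i f(c'_i) ≤ (1 − ln β) · ∑_i f(c_i), where c'_i and c_i are the part sizes of φ' and φ. In other words, the greedy algorithm approximates the Rent-or-Buy set cover problem within a factor of 1 − ln β. -/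
open Finset

variable {V : Type*} [Fintype V] [DecidableEq V] {I : SetCoverInstance V}

/-!
Let `C` be the cost of an arbitrary cover `c`, and `N j` the number of elements still uncovered
before the `j`-th greedy step, which picks a part of size `p`. The cover `c` splits the uncovered
elements into at most one piece per set `S`, of size at most `min (c_S, p)`, and
`min (c_S, p) ≤ max (p, t) · f(c_S)`; hence `N j ≤ C · max (p, t)`. The step costs
`f(p) = p / max (p, t) ≤ p · min (1/t, C / N j)`, and `N` drops by `p` during the step, so
the total greedy cost is at most
`∑_{i=1}^{n} min (1/t, C/i) ≤ 1 + C (ln n - ln t) ≤ (1 - ln β) C`, using `C ≥ 1` at the end.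
-/

noncomputable def rentOrBuy (t m : ℕ) : ℝ := if m ≤ t then (m : ℝ) / t else 1

lemma rentOrBuy_zero (t : ℕ) : rentOrBuy t 0 = 0 := by
  simp [rentOrBuy]

lemma rentOrBuy_eq_div_max (t m : ℕ) : rentOrBuy t m = m / max (m : ℝ) t := by
  unfold rentOrBuy
  split_ifs with h
  · rw [max_eq_right (by exact_mod_cast h)]
  · have hm : (t : ℝ) < m := by exact_mod_cast not_le.1 h
    rw [max_eq_left hm.le, div_self (t.cast_nonneg.trans_lt hm).ne']

lemma min_le_max_mul_rentOrBuy {t : ℕ} (ht : 0 < t) (m p : ℕ) :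
    (min m p : ℝ) ≤ max (p : ℝ) t * rentOrBuy t m := by
  unfold rentOrBuy
  split_ifs
  · calc (min m p : ℝ) ≤ m := min_le_left _ _
      _ = t * (m / t) := by field_simp
      _ ≤ max (p : ℝ) t * (m / t) := by gcongr; exact le_max_right _ _
  · simp

lemma div_le_rentOrBuy {t m n : ℕ} (hmn : m ≤ n) (htn : t ≤ n) :
    (m : ℝ) / n ≤ rentOrBuy t m := by
  rw [rentOrBuy_eq_div_max]
  rcases Nat.eq_zero_or_pos m with rfl | hm
  · simp
  · exact div_le_div_of_nonneg_left (by positivity) (by positivity)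
      (max_le (by exact_mod_cast hmn) (by exact_mod_cast htn))

lemma rentOrBuy_le_mul_min {t p N : ℕ} {C : ℝ} (ht : 0 < t) (hpN : p ≤ N)
    (hN : N ≤ max (p : ℝ) t * C) : rentOrBuy t p ≤ p * min (t : ℝ)⁻¹ (C / N) := by
  rcases Nat.eq_zero_or_pos p with rfl | hp
  · simp [rentOrBuy_zero]
  have hmax : (0 : ℝ) < max (p : ℝ) t := lt_max_of_lt_right (by exact_mod_cast ht)
  rw [rentOrBuy_eq_div_max, div_eq_mul_inv]
  gcongr
  refine le_min (inv_anti₀ (by exact_mod_cast ht) (le_max_right _ _)) ?_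
  rw [inv_eq_one_div, div_le_div_iff₀ hmax (by exact_mod_cast hp.trans_le hpN)]
  linarith

lemma sum_comp_card_div_card {α : Type*} (s : Finset α) {g : ℕ → ℝ} (hg : g 0 = 0) :
    ∑ _v ∈ s, g s.card / s.card = g s.card := by
  rw [sum_const, nsmul_eq_mul]
  rcases eq_or_ne s.card 0 with h | h
  · simp [h, hg]
  · field_simp

lemma sum_Ioc_inv_le_log_sub {t n : ℕ} (ht : 0 < t) (htn : t ≤ n) :
    ∑ i ∈ Ioc t n, (i : ℝ)⁻¹ ≤ Real.log n - Real.log t := by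
  induction n, htn using Nat.le_induction with
  | base => simp
  | succ n htn ih =>
    have hn : (0 : ℝ) < n := by exact_mod_cast ht.trans_le htn
    have hstep : ((n : ℝ) + 1)⁻¹ ≤ Real.log (n + 1) - Real.log n := by
      have := Real.one_sub_inv_le_log_of_pos (x := (n + 1) / n) (by positivity)
      rwa [Real.log_div (by positivity) hn.ne', inv_div, one_sub_div (by positivity),
        add_sub_cancel_left, one_div] at this
    rw [sum_Ioc_succ_top (by omega)]
    push_cast
    linarith

lemma sum_Ioc_min_le_one_add {t n : ℕ} (ht : 0 < t) (htn : t ≤ n) {C : ℝ} (hC : 0 ≤ C) :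
    ∑ i ∈ Ioc 0 n, min (t : ℝ)⁻¹ (C / i) ≤ 1 + C * (Real.log n - Real.log t) := by
  rw [← sum_Ioc_consecutive _ (Nat.zero_le t) htn]
  have hlow : ∑ i ∈ Ioc 0 t, min (t : ℝ)⁻¹ (C / i) ≤ 1 :=
    calc _ ≤ ∑ _i ∈ Ioc 0 t, (t : ℝ)⁻¹ := sum_le_sum fun i _ => min_le_left _ _
      _ = 1 := by simp [Nat.card_Ioc, ht.ne']
  have hhigh : ∑ i ∈ Ioc t n, min (t : ℝ)⁻¹ (C / i) ≤ C * (Real.log n - Real.log t) :=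
    calc _ ≤ ∑ i ∈ Ioc t n, C * (i : ℝ)⁻¹ := sum_le_sum fun i _ => min_le_right _ _
      _ ≤ _ := by
        rw [← mul_sum]
        exact mul_le_mul_of_nonneg_left (sum_Ioc_inv_le_log_sub ht htn) hC
  linarith

section Telescoping

variable {h : ℕ → ℝ}

lemma mul_le_sum_Ioc (hanti : AntitoneOn h (Set.Ici 1)) (a p : ℕ) :
    p * h (a + p) ≤ ∑ i ∈ Ioc a (a + p), h i := by
  have := card_nsmul_le_sum (Ioc a (a + p)) h (h (a + p)) fun i hi => by
    rw [mem_Ioc] at hi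
    exact hanti (by simp only [Set.mem_Ici]; omega) (by simp only [Set.mem_Ici]; omega) hi.2
  simpa using this

lemma sum_mul_le_sum_Ioc (hnonneg : ∀ i, 0 ≤ h i) (hanti : AntitoneOn h (Set.Ici 1)) (m : ℕ) :
    ∀ (p N : ℕ → ℕ), (∀ j < m, N j = N (j + 1) + p j) →
      ∑ j ∈ range m, p j * h (N j) ≤ ∑ i ∈ Ioc 0 (N 0), h i := by
  induction m with
  | zero =>
    intro _ _ _
    simpa using sum_nonneg fun i _ => hnonneg i
  | succ m ih =>
    intro p N hN
    have hN0 : N 0 = N 1 + p 0 := hN 0 m.succ_pos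
    have htail := ih (fun j => p (j + 1)) (fun j => N (j + 1)) fun j hj => hN (j + 1) (by omega)
    have hhead := mul_le_sum_Ioc hanti (N 1) (p 0)
    rw [← hN0] at hhead
    rw [sum_range_succ', ← sum_Ioc_consecutive _ (Nat.zero_le (N 1)) (by omega)]
    linarith

end Telescoping

lemma Cover.sum_partSize (c : Cover I) : ∑ S ∈ I.sets, c.partSize S = Fintype.card V :=
  (card_eq_sum_card_fiberwise fun v _ => c.mem_sets v).symm

lemma Cover.one_le_sum_rentOrBuy (c : Cover I) {t : ℕ} (htn : t ≤ Fintype.card V)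
    (hV : 0 < Fintype.card V) : 1 ≤ ∑ S ∈ I.sets, rentOrBuy t (c.partSize S) :=
  calc (1 : ℝ) = ∑ S ∈ I.sets, (c.partSize S : ℝ) / Fintype.card V := by
        rw [← sum_div, ← Nat.cast_sum, c.sum_partSize, div_self (by positivity)]
    _ ≤ _ := sum_le_sum fun S _ =>
        div_le_rentOrBuy ((card_filter_le _ _).trans_eq card_univ) htn

lemma Cover.card_le_max_mul_sum_rentOrBuy (c : Cover I) {t p : ℕ} (ht : 0 < t) (U : Finset V)
    (hU : ∀ T ∈ I.sets, (T ∩ U).card ≤ p) :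
    (U.card : ℝ) ≤ max (p : ℝ) t * ∑ S ∈ I.sets, rentOrBuy t (c.partSize S) := by
  rw [card_eq_sum_card_fiberwise fun v _ => c.mem_sets v, Nat.cast_sum, mul_sum]
  refine sum_le_sum fun S hS => le_trans ?_ (min_le_max_mul_rentOrBuy ht _ p)
  have hpart : {v ∈ U | c.φ v = S}.card ≤ c.partSize S :=
    card_le_card (filter_subset_filter _ (subset_univ U))
  have hset : {v ∈ U | c.φ v = S}.card ≤ p := by
    refine (card_le_card fun v hv => ?_).trans (hU S hS)
    obtain ⟨hvU, rfl⟩ := mem_filter.1 hv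
    exact mem_inter.2 ⟨c.self_mem v, hvU⟩
  exact_mod_cast le_min hpart hset

lemma Cover.sum_comp_partSize (c : Cover I) {g : ℕ → ℝ} (hg : g 0 = 0) :
    ∑ S ∈ I.sets, g (c.partSize S) = ∑ v, g (c.a v) / c.a v := by
  rw [← sum_fiberwise_of_maps_to fun v _ => c.mem_sets v]
  refine sum_congr rfl fun S _ => ?_
  have ha : ∀ v, c.φ v = S → c.a v = c.partSize S := fun v hv => by
    rw [Cover.a, hv, Cover.partSize]
  exact (sum_comp_card_div_card _ hg).symm.trans
    (sum_congr rfl fun v hv => by rw [ha v (mem_filter.1 hv).2]; rfl)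

def uncovered (P : ℕ → Finset V) (j : ℕ) : Finset V := univ \ (range j).biUnion P

lemma disjoint_uncovered {P : ℕ → Finset V} {i j : ℕ} (hij : i < j) :
    Disjoint (P i) (uncovered P j) :=
  disjoint_sdiff.mono_left (subset_biUnion_of_mem P (mem_range.2 hij))

lemma card_uncovered_succ {P : ℕ → Finset V} {j : ℕ} (hP : P j ⊆ uncovered P j) :
    (uncovered P j).card = (uncovered P (j + 1)).card + (P j).card := by
  have : uncovered P (j + 1) = uncovered P j \ P j := by
    ext v
    simp [uncovered, range_add_one, and_comm]
  rw [this, card_sdiff_add_card_eq_card hP]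

lemma pairwiseDisjoint_of_subset_uncovered {P : ℕ → Finset V} {m : ℕ}
    (hP : ∀ j < m, P j ⊆ uncovered P j) : (range m : Set ℕ).PairwiseDisjoint P := by
  intro i hi j hj hij
  simp only [coe_range, Set.mem_Iio] at hi hj
  rcases lt_or_gt_of_ne hij with h | h
  · exact (disjoint_uncovered h).mono_right (hP j hj)
  · exact ((disjoint_uncovered h).mono_right (hP i hi)).symm

lemma Cover.IsGreedy.exists_stages {c : Cover I} (hc : c.IsGreedy) :
    ∃ (m : ℕ) (P : ℕ → Finset V), (∀ j < m, P j ⊆ uncovered P j) ∧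
      (∀ j < m, ∀ T ∈ I.sets, (T ∩ uncovered P j).card ≤ (P j).card) ∧
      ∀ g : ℕ → ℝ, g 0 = 0 →
        ∑ S ∈ I.sets, g (c.partSize S) = ∑ j ∈ range m, g (P j).card := by
  obtain ⟨m, P, hcov, hgreedy, hfib⟩ := hc
  have hsub : ∀ j < m, P j ⊆ uncovered P j := fun j hj => by
    obtain ⟨S, -, hPj, -⟩ := hgreedy j hj
    rw [hPj]
    exact sdiff_subset_sdiff (subset_univ S) le_rfl
  refine ⟨m, P, hsub, fun j hj T hT => ?_, fun g hg => ?_⟩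
  · obtain ⟨S, -, -, hmax⟩ := hgreedy j hj
    have : T ∩ uncovered P j = T \ (range j).biUnion P := by
      ext v
      simp [uncovered]
    exact this ▸ hmax T hT
  · have huniv : (univ : Finset V) = (range m).biUnion P :=
      (eq_univ_of_forall fun v => by simpa using hcov v).symm
    rw [c.sum_comp_partSize hg, huniv,
      sum_biUnion (pairwiseDisjoint_of_subset_uncovered hsub)]
    refine sum_congr rfl fun j hj => ?_
    have ha : ∀ v ∈ P j, c.a v = (P j).card := fun v hv =>
      congrArg card (hfib j (mem_range.1 hj) v hv)
    exact (sum_congr rfl fun v hv => by rw [ha v hv]).trans (sum_comp_card_div_card _ hg)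

/-- with the Rent-or-Buy cost function with breakpoint `t = βn`, every greedy
cover `c'` and every cover `c` on a ground set of size `n` satisfy
`∑ f(c'_i) ≤ (1 - ln β) · ∑ f(c_i)`. -/
theorem greedy_rentOrBuy_approx (t : ℕ) (ht : 1 ≤ t) (htn : t ≤ Fintype.card V)
    (β : ℝ) (hβ : β = (t : ℝ) / (Fintype.card V : ℝ))
    (f : ℕ → ℝ) (hf : ∀ m : ℕ, f m = if m ≤ t then (m : ℝ) / t else 1)
    (c' : Cover I) (hc' : c'.IsGreedy) (c : Cover I) :
    ∑ S ∈ I.sets, f (c'.partSize S) ≤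
      (1 - Real.log β) * ∑ S ∈ I.sets, f (c.partSize S) := by
  obtain rfl : f = rentOrBuy t := funext hf
  obtain ⟨m, P, hsub, hmax, hcost⟩ := hc'.exists_stages
  set n := Fintype.card V
  set C := ∑ S ∈ I.sets, rentOrBuy t (c.partSize S)
  have hC : 1 ≤ C := c.one_le_sum_rentOrBuy htn (by omega)
  have hanti : AntitoneOn (fun i : ℕ => min (t : ℝ)⁻¹ (C / i)) (Set.Ici 1) :=
    fun i hi j _ hij => min_le_min le_rfl <|
      div_le_div_of_nonneg_left (by linarith) (by exact_mod_cast hi) (by exact_mod_cast hij)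
  have hN0 : (uncovered P 0).card = n := by simp [uncovered, n]
  calc ∑ S ∈ I.sets, rentOrBuy t (c'.partSize S)
      = ∑ j ∈ range m, rentOrBuy t (P j).card := hcost _ (rentOrBuy_zero t)
    _ ≤ ∑ j ∈ range m, (P j).card * min (t : ℝ)⁻¹ (C / (uncovered P j).card) :=
        sum_le_sum fun j hj => rentOrBuy_le_mul_min ht (card_le_card (hsub j (mem_range.1 hj)))
          (c.card_le_max_mul_sum_rentOrBuy ht _ (hmax j (mem_range.1 hj)))
    _ ≤ ∑ i ∈ Ioc 0 n, min (t : ℝ)⁻¹ (C / i) :=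
        hN0 ▸ sum_mul_le_sum_Ioc (fun i => by positivity) hanti m _ _
          fun j hj => card_uncovered_succ (hsub j hj)
    _ ≤ 1 + C * (Real.log n - Real.log t) := sum_Ioc_min_le_one_add ht htn (by linarith)
    _ ≤ (1 - Real.log β) * C := by
        rw [hβ, Real.log_div (Nat.cast_ne_zero.2 (by omega)) (Nat.cast_ne_zero.2 (by omega))]
        linarith
end

section
/- Let G be a finite simple graph on n vertices, let ρ ≥ 1 be a real number, and let φ' be a ρ-approximate MaxIS coloring of G. Then for every real p > 0 and every proper coloring φ of G, M_p(φ) ≤ ρ (p+1)^{1/p} · M_p(φ'). In particular (ρ = 1), the coloring obtained by iteratively removing a maximum independent set approximates the maximum p-mean graph coloring problem within a factor of (p+1)^{1/p}. -/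
open Finset

variable {V : Type*} [Fintype V] [DecidableEq V]

/-- A proper coloring of `G`: adjacent vertices receive different colors. -/
def IsProperColoring (G : SimpleGraph V) (φ : V → ℕ) : Prop :=
  ∀ v w : V, G.Adj v w → φ v ≠ φ w

/-- `c_i`: the size of the color class `i`. -/
def classSize (φ : V → ℕ) (i : ℕ) : ℕ :=
  (Finset.univ.filter fun w => φ w = i).card

/-- `a_v`: the size of the color class containing `v`. -/
def classOfSize (φ : V → ℕ) (v : V) : ℕ := classSize φ (φ v)

/-- The generalized `p`-mean of the values `a_v` of a coloring. -/
noncomputable def colPMean (φ : V → ℕ) (p : ℝ) : ℝ :=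
  ((1 / (Fintype.card V : ℝ)) * ∑ v : V, (classOfSize φ v : ℝ) ^ p) ^ (1 / p)

/-- An independent set of vertices. -/
def IsIndep (G : SimpleGraph V) (s : Finset V) : Prop :=
  ∀ v ∈ s, ∀ w ∈ s, v ≠ w → ¬G.Adj v w

/-- A `ρ`-approximate MaxIS coloring: a proper coloring whose color classes can be ordered
`P 0, …, P (m-1)` so that each `P j` is an independent set of the graph that remains after
removing the previous classes, of size at least `1/ρ` times the independence number of the
remaining graph. -/
def IsRhoApproxMaxISColoring (G : SimpleGraph V) (ρ : ℝ) (φ : V → ℕ) : Prop :=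
  IsProperColoring G φ ∧
  ∃ (m : ℕ) (P : ℕ → Finset V),
    (∀ v : V, ∃ j < m, v ∈ P j) ∧
    (∀ j < m,
      P j ⊆ Finset.univ \ (Finset.range j).biUnion P ∧
      IsIndep G (P j) ∧
      ∀ T : Finset V, T ⊆ Finset.univ \ (Finset.range j).biUnion P →
        IsIndep G T → (T.card : ℝ) ≤ ρ * (P j).card) ∧
    (∀ j < m, ∀ v ∈ P j, (Finset.univ.filter fun w => φ w = φ v) = P j)

/-- The entropy (in bits) of a proper coloring: the entropy of the distribution obtained by
dividing the sizes of the (nonempty) color classes by `n`. -/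
noncomputable def colEntropy (φ : V → ℕ) : ℝ :=
  -∑ i ∈ Finset.univ.image φ,
      ((classSize φ i : ℝ) / (Fintype.card V : ℝ)) *
        Real.logb 2 ((classSize φ i : ℝ) / (Fintype.card V : ℝ))

/-! Let `stage v` be the round in which the MaxIS process removes `v`. The vertices of the
`φ`-class of `v` removed no earlier than `v` form an independent set of the graph remaining at
that round, so there are at most `ρ a'_v` of them. Ordering a class of size `c` by stage, these
counts dominate `c, c - 1, …, 1`, and `c ^ (p + 1) ≤ (p + 1) ∑_{k ≤ c} k ^ p`; summing over the
classes gives `∑ a_v ^ p = ∑ c_i ^ (p + 1) ≤ (p + 1) ρ ^ p ∑ a'_v ^ p`. -/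

theorem add_one_rpow_add_one_le {x p : ℝ} (hx : 0 ≤ x) (hp : 0 ≤ p) :
    (x + 1) ^ (p + 1) ≤ x ^ (p + 1) + (p + 1) * (x + 1) ^ p := by
  have hx1 : 0 < x + 1 := by linarith
  -- Bernoulli's inequality for `x / (x + 1) = 1 - 1 / (x + 1)`
  have hB := one_add_mul_self_le_rpow_one_add (s := -(x + 1)⁻¹) (p := p + 1)
    (by rw [neg_le_neg_iff]; exact inv_le_one_of_one_le₀ (by linarith)) (by linarith)
  have hbase : 1 + -(x + 1)⁻¹ = x / (x + 1) := by field_simp; ring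
  rw [hbase, Real.div_rpow hx hx1.le, le_div_iff₀ (by positivity)] at hB
  have hsucc : (x + 1) ^ (p + 1) = (x + 1) ^ p * (x + 1) := Real.rpow_add_one hx1.ne' p
  have hexpand : (1 + (p + 1) * -(x + 1)⁻¹) * (x + 1) ^ (p + 1) =
      (x + 1) ^ (p + 1) - (p + 1) * (x + 1) ^ p := by
    rw [hsucc]; field_simp; ring
  linarith

theorem Finset.card_rpow_add_one_le_sum_card_ge_rpow {ι α : Type*} [DecidableEq ι]
    [LinearOrder α] (f : ι → α) (s : Finset ι) {p : ℝ} (hp : 0 ≤ p) :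
    (#s : ℝ) ^ (p + 1) ≤ (p + 1) * ∑ x ∈ s, (#{y ∈ s | f x ≤ f y} : ℝ) ^ p := by
  induction s using Finset.induction_on_min_value f with
  | empty => simp [Real.zero_rpow (by positivity : p + 1 ≠ 0)]
  | insert a s ha hmin ih =>
    have hcard_a : #{y ∈ insert a s | f a ≤ f y} = #s + 1 := by
      rw [filter_true_of_mem fun y hy => ?_, card_insert_of_notMem ha]
      rcases mem_insert.mp hy with rfl | hy
      exacts [le_rfl, hmin y hy]
    have hcard_mono : ∑ x ∈ s, (#{y ∈ s | f x ≤ f y} : ℝ) ^ p ≤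
        ∑ x ∈ s, (#{y ∈ insert a s | f x ≤ f y} : ℝ) ^ p :=
      sum_le_sum fun x _ => by gcongr; exact subset_insert a s
    rw [sum_insert ha, hcard_a, card_insert_of_notMem ha, mul_add]
    push_cast
    have hstep := add_one_rpow_add_one_le (Nat.cast_nonneg #s) hp
    have := mul_le_mul_of_nonneg_left hcard_mono (by linarith : 0 ≤ p + 1)
    linarith

theorem sum_classOfSize_rpow_le {α : Type*} [LinearOrder α] (φ : V → ℕ) (f : V → α) {p : ℝ}
    (hp : 0 ≤ p) :
    ∑ v, (classOfSize φ v : ℝ) ^ p ≤ (p + 1) * ∑ v, (#{w | φ w = φ v ∧ f v ≤ f w} : ℝ) ^ p := by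
  have hmaps : ∀ v ∈ univ, φ v ∈ univ.image φ := fun v _ => mem_image_of_mem φ (mem_univ v)
  rw [← sum_fiberwise_of_maps_to hmaps, ← sum_fiberwise_of_maps_to hmaps, mul_sum]
  refine sum_le_sum fun i _ => ?_
  set C : Finset V := {w | φ w = i}
  calc ∑ v ∈ C, (classOfSize φ v : ℝ) ^ p = (#C : ℝ) ^ (p + 1) := by
        rw [Real.rpow_add_one' (Nat.cast_nonneg _) (by positivity), mul_comm, ← nsmul_eq_mul,
          ← sum_const]
        exact sum_congr rfl fun v hv => by rw [classOfSize, classSize, (mem_filter.mp hv).2]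
    _ ≤ (p + 1) * ∑ v ∈ C, (#{w ∈ C | f v ≤ f w} : ℝ) ^ p :=
        card_rpow_add_one_le_sum_card_ge_rpow f C hp
    _ = (p + 1) * ∑ v ∈ C, (#{w | φ w = φ v ∧ f v ≤ f w} : ℝ) ^ p := by
        congr 1
        refine sum_congr rfl fun v hv => ?_
        rw [(mem_filter.mp hv).2, filter_filter]

theorem IsRhoApproxMaxISColoring.exists_stage {G : SimpleGraph V} {ρ : ℝ} {φ : V → ℕ}
    (h : IsRhoApproxMaxISColoring G ρ φ) :
    ∃ stage : V → ℕ, ∀ v (T : Finset V), IsIndep G T → (∀ w ∈ T, stage v ≤ stage w) →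
      (#T : ℝ) ≤ ρ * classOfSize φ v := by
  obtain ⟨-, m, P, hcover, hstep, hclass⟩ := h
  choose stage hstage_lt hmem using hcover
  refine ⟨stage, fun v T hT hlate => ?_⟩
  obtain ⟨-, -, hmax⟩ := hstep (stage v) (hstage_lt v)
  have hremain : T ⊆ univ \ (range (stage v)).biUnion P := fun w hw => by
    have hw_new := (hstep (stage w) (hstage_lt w)).1 (hmem w)
    simp only [mem_sdiff, mem_univ, mem_biUnion, mem_range, true_and, not_exists, not_and]
      at hw_new ⊢
    exact fun k hk => hw_new k (hk.trans_le (hlate w hw))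
  have hclassv : classOfSize φ v = #(P (stage v)) := by
    rw [classOfSize, classSize, hclass _ (hstage_lt v) v (hmem v)]
  rw [hclassv]
  exact hmax T hremain hT

omit [DecidableEq V] in
theorem colPMean_le_mul_of_sum_rpow_le {φ ψ : V → ℕ} {p c : ℝ} (hp : 0 < p) (hc : 0 ≤ c)
    (h : ∑ v, (classOfSize φ v : ℝ) ^ p ≤ c ^ p * ∑ v, (classOfSize ψ v : ℝ) ^ p) :
    colPMean φ p ≤ c * colPMean ψ p := by
  unfold colPMean
  set n : ℝ := (Fintype.card V : ℝ)
  calc _ ≤ (c ^ p * (1 / n * ∑ v, (classOfSize ψ v : ℝ) ^ p)) ^ (1 / p) := by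
        refine Real.rpow_le_rpow (by positivity) ?_ (by positivity)
        rw [mul_left_comm]
        exact mul_le_mul_of_nonneg_left h (by positivity)
    _ = _ := by
        rw [Real.mul_rpow (by positivity) (by positivity), one_div p, Real.rpow_rpow_inv hc hp.ne']

/-- if `φ'` is a `ρ`-approximate MaxIS coloring of `G` (with `ρ ≥ 1`), then for
every `p > 0` and every proper coloring `φ` of `G`,
`M_p(φ) ≤ ρ (p+1)^{1/p} · M_p(φ')`. -/
theorem rhoApproxMaxIS_pMean (G : SimpleGraph V) (ρ : ℝ) (hρ : 1 ≤ ρ)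
    (φ' : V → ℕ) (hφ' : IsRhoApproxMaxISColoring G ρ φ')
    (p : ℝ) (hp : 0 < p) (φ : V → ℕ) (hφ : IsProperColoring G φ) :
    colPMean φ p ≤ ρ * (p + 1) ^ (1 / p) * colPMean φ' p := by
  have hρ₀ : 0 ≤ ρ := by linarith
  obtain ⟨stage, hstage⟩ := hφ'.exists_stage
  have hlate (v : V) : (#{w | φ w = φ v ∧ stage v ≤ stage w} : ℝ) ≤ ρ * classOfSize φ' v := by
    refine hstage v _ (fun a ha b hb _ hab => hφ a b hab ?_) (by simp)
    simp only [mem_filter] at ha hb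
    exact ha.2.1.trans hb.2.1.symm
  refine colPMean_le_mul_of_sum_rpow_le hp (by positivity) ?_
  calc ∑ v, (classOfSize φ v : ℝ) ^ p
      ≤ (p + 1) * ∑ v, (#{w | φ w = φ v ∧ stage v ≤ stage w} : ℝ) ^ p :=
        sum_classOfSize_rpow_le φ stage hp.le
    _ ≤ (p + 1) * ∑ v, (ρ * classOfSize φ' v) ^ p := by gcongr with v; exact hlate v
    _ = (ρ * (p + 1) ^ (1 / p)) ^ p * ∑ v, (classOfSize φ' v : ℝ) ^ p := by
        simp only [Real.mul_rpow hρ₀ (Nat.cast_nonneg _), ← mul_sum]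
        rw [Real.mul_rpow hρ₀ (by positivity), one_div, Real.rpow_inv_rpow (by positivity) hp.ne']
        ring
end

section
/- Let G be a finite simple graph on n vertices, let ρ ≥ 1 be a real number, and let φ' be a ρ-approximate MaxIS coloring of G. Then for every proper coloring φ of G, the entropies satisfy H(φ') ≤ H(φ) + log₂ ρ + log₂ e. -/
/-!
Write `a_v` for the size of the color class of `v`, so that `H(ψ) = log₂ n - (1/n) ∑_v log₂ a_v`.
It therefore suffices to bound `∑_{v ∈ S} ln a_v = |S| ln |S|` for each color class `S` of `φ`.
List `S` in the order in which the MaxIS procedure removes its vertices, and let `r_v` be the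
number of vertices of `S` removed no earlier than `v`. When `v` is removed, these form an
independent set of the remaining graph, so `r_v ≤ ρ a'_v`, where `a'_v` is the size of the class
of `v` in `φ'`. Since `(|S|/e)^|S| ≤ |S|! ≤ ∏_{v ∈ S} r_v ≤ ρ^|S| ∏_{v ∈ S} a'_v`, summing over
the classes of `φ` gives the claim.
-/

open Finset

variable {V : Type*} [Fintype V] [DecidableEq V]

open Real

theorem Finset.factorial_card_le_prod_card_filter_le {α β : Type*} [DecidableEq α]
    [LinearOrder β] (f : α → β) (S : Finset α) :
    (#S).factorial ≤ ∏ v ∈ S, #{w ∈ S | f v ≤ f w} := by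
  induction hS : #S generalizing S with
  | zero => simp [card_eq_zero.mp hS]
  | succ n ih =>
    obtain ⟨v₀, hv₀, hmin⟩ := S.exists_min_image f (card_pos.mp (by omega))
    have hfirst : #{w ∈ S | f v₀ ≤ f w} = n + 1 := by
      rw [filter_true_of_mem hmin, hS]
    have hrest : n.factorial ≤ ∏ v ∈ S.erase v₀, #{w ∈ S | f v ≤ f w} :=
      (ih (S.erase v₀) (by rw [card_erase_of_mem hv₀, hS]; rfl)).trans <|
        prod_le_prod' fun v _ ↦ card_le_card (filter_subset_filter _ (erase_subset v₀ S))
    rw [Nat.factorial_succ, ← mul_prod_erase S _ hv₀, hfirst]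
    exact Nat.mul_le_mul_left _ hrest

theorem Real.natCast_mul_log_sub_le_log_factorial (n : ℕ) :
    n * log n - n ≤ log n.factorial := by
  rcases n.eq_zero_or_pos with rfl | hn
  · simp
  have hn' : (0 : ℝ) < n := by exact_mod_cast hn
  have h := log_le_log (by positivity) (pow_div_factorial_le_exp (n : ℝ) hn'.le n)
  rw [log_div (by positivity) (by positivity), log_pow, log_exp] at h
  linarith

theorem Finset.card_mul_log_card_le_sum_log_add {α β : Type*} [DecidableEq α] [LinearOrder β]
    (f : α → β) (a : α → ℝ) (ρ : ℝ) (S : Finset α)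
    (h : ∀ v ∈ S, (#{w ∈ S | f v ≤ f w} : ℝ) ≤ ρ * a v) :
    #S * log #S ≤ ∑ v ∈ S, log (a v) + #S * (log ρ + 1) := by
  have hpos : ∀ v ∈ S, (0 : ℝ) < #{w ∈ S | f v ≤ f w} := fun v hv ↦
    Nat.cast_pos.mpr (card_pos.mpr ⟨v, mem_filter.mpr ⟨hv, le_rfl⟩⟩)
  have hfact : log (#S).factorial ≤ ∑ v ∈ S, log #{w ∈ S | f v ≤ f w} := by
    rw [← log_prod fun v hv ↦ (hpos v hv).ne']
    exact log_le_log (by positivity) (mod_cast factorial_card_le_prod_card_filter_le f S)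
  have hrank : ∀ v ∈ S, log #{w ∈ S | f v ≤ f w} ≤ log ρ + log (a v) := by
    intro v hv
    have hρa : 0 < ρ * a v := (hpos v hv).trans_le (h v hv)
    rw [← log_mul (left_ne_zero_of_mul hρa.ne') (right_ne_zero_of_mul hρa.ne')]
    exact log_le_log (hpos v hv) (h v hv)
  calc #S * log #S ≤ log (#S).factorial + #S := by
        linarith [natCast_mul_log_sub_le_log_factorial #S]
    _ ≤ ∑ v ∈ S, (log ρ + log (a v)) + #S := by gcongr; exact hfact.trans (sum_le_sum hrank)
    _ = ∑ v ∈ S, log (a v) + #S * (log ρ + 1) := by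
      rw [sum_add_distrib, sum_const, nsmul_eq_mul]; ring

section ColorClasses

variable {α : Type*} [Fintype α]

theorem classOfSize_pos (ψ : α → ℕ) (v : α) : 0 < classOfSize ψ v :=
  card_pos.mpr ⟨v, mem_filter.mpr ⟨mem_univ v, rfl⟩⟩

theorem sum_comp_classOfSize (ψ : α → ℕ) (g : ℕ → ℝ) :
    ∑ v, g (classOfSize ψ v) = ∑ i ∈ univ.image ψ, classSize ψ i * g (classSize ψ i) := by
  rw [← sum_fiberwise_of_maps_to fun v _ ↦ mem_image_of_mem ψ (mem_univ v)]
  refine sum_congr rfl fun i _ ↦ ?_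
  rw [sum_congr rfl fun v hv ↦ by rw [classOfSize, (mem_filter.mp hv).2], sum_const,
    nsmul_eq_mul]
  rfl

theorem colEntropy_eq_logb_card_sub (ψ : α → ℕ) :
    colEntropy ψ =
      logb 2 (Fintype.card α) - (∑ v, logb 2 (classOfSize ψ v)) / Fintype.card α := by
  set n : ℝ := (Fintype.card α : ℝ)
  have hvertex : colEntropy ψ = -(∑ v, logb 2 (classOfSize ψ v / n)) / n := by
    rw [sum_comp_classOfSize ψ fun c ↦ logb 2 (c / n), neg_div, sum_div, colEntropy]
    congr 1
    exact sum_congr rfl fun i _ ↦ by ring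
  have hsplit :
      ∑ v, logb 2 (classOfSize ψ v / n) = ∑ v, logb 2 (classOfSize ψ v) - n * logb 2 n := by
    rw [sum_congr rfl fun v _ ↦ logb_div (Nat.cast_pos.mpr (classOfSize_pos ψ v)).ne'
      (Nat.cast_pos.mpr (Fintype.card_pos_iff.mpr ⟨v⟩)).ne', sum_sub_distrib, sum_const,
      card_univ, nsmul_eq_mul]
  rw [hvertex, hsplit]
  rcases eq_or_ne n 0 with hn | hn
  · simp [hn]
  · field_simp
    ring

theorem colEntropy_sub_colEntropy (ψ χ : α → ℕ) :
    colEntropy ψ - colEntropy χ =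
      (∑ v, log (classOfSize χ v) - ∑ v, log (classOfSize ψ v)) / (Fintype.card α * log 2) := by
  simp only [colEntropy_eq_logb_card_sub, logb, ← sum_div]
  field_simp
  ring

end ColorClasses

theorem IsRhoApproxMaxISColoring.exists_removalStep {G : SimpleGraph V} {ρ : ℝ} {φ : V → ℕ}
    (h : IsRhoApproxMaxISColoring G ρ φ) :
    ∃ step : V → ℕ, ∀ v (T : Finset V), IsIndep G T → (∀ w ∈ T, step v ≤ step w) →
      (#T : ℝ) ≤ ρ * classOfSize φ v := by
  obtain ⟨-, m, P, hcover, hP, hclass⟩ := h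
  choose step hlt hmem using hcover
  refine ⟨step, fun v T hT hlater ↦ ?_⟩
  rw [classOfSize, classSize, hclass _ (hlt v) v (hmem v)]
  refine (hP _ (hlt v)).2.2 T (fun w hw ↦ ?_) hT
  have hfresh := (hP _ (hlt w)).1 (hmem w)
  simp only [mem_sdiff, mem_biUnion, mem_range, mem_univ, true_and, not_exists,
    not_and] at hfresh ⊢
  exact fun i hi ↦ hfresh i (hi.trans_le (hlater w hw))

theorem sum_log_classOfSize_le {G : SimpleGraph V} {ρ : ℝ} {φ' φ : V → ℕ}
    (hφ' : IsRhoApproxMaxISColoring G ρ φ') (hφ : IsProperColoring G φ) :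
    ∑ v, log (classOfSize φ v) ≤
      ∑ v, log (classOfSize φ' v) + Fintype.card V * (log ρ + 1) := by
  obtain ⟨step, hstep⟩ := hφ'.exists_removalStep
  have hcard : (Fintype.card V : ℝ) = ∑ i ∈ univ.image φ, (classSize φ i : ℝ) := by
    simpa using sum_comp_classOfSize φ fun _ ↦ 1
  rw [sum_comp_classOfSize φ fun c ↦ log c,
    ← sum_fiberwise_of_maps_to fun v _ ↦ mem_image_of_mem φ (mem_univ v), hcard, sum_mul,
    ← sum_add_distrib]
  refine sum_le_sum fun i _ ↦ card_mul_log_card_le_sum_log_add step _ ρ _ fun v _ ↦ ?_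
  refine hstep v _ (fun a ha b hb _ hab ↦ hφ a b hab ?_) fun w hw ↦ (mem_filter.mp hw).2
  simp only [mem_filter, mem_univ, true_and] at ha hb
  rw [ha.1, hb.1]

/-- if `φ'` is a `ρ`-approximate MaxIS coloring of `G` (with `ρ ≥ 1`), then for
every proper coloring `φ` of `G`, `H(φ') ≤ H(φ) + log₂ ρ + log₂ e`. -/
theorem rhoApproxMaxIS_entropy (G : SimpleGraph V) (ρ : ℝ) (hρ : 1 ≤ ρ)
    (φ' : V → ℕ) (hφ' : IsRhoApproxMaxISColoring G ρ φ')
    (φ : V → ℕ) (hφ : IsProperColoring G φ) :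
    colEntropy φ' ≤ colEntropy φ + Real.logb 2 ρ + Real.logb 2 (Real.exp 1) := by
  suffices colEntropy φ' - colEntropy φ ≤ (log ρ + 1) / log 2 by
    rw [logb, logb, log_exp, add_assoc, ← add_div]
    linarith
  rw [colEntropy_sub_colEntropy, ← div_div, div_le_div_iff_of_pos_right (log_pos one_lt_two)]
  refine div_le_of_le_mul₀ (Nat.cast_nonneg _) (by linarith [log_nonneg hρ]) ?_
  linarith [sum_log_classOfSize_le hφ' hφ]
end

section
/- Let G be a finite simple graph and p > 0 a real number. Among all partitions of the vertex set of G into cliques that maximize ∑_i |C_i|^{p+1} over the parts C_i, there exists one in which some part is a maximal clique of G (i.e., a clique not properly contained in any other clique of G). -/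
/-!
Take an optimal partition `P` and a largest part `C`. If `C` were not a maximal clique, some
vertex `v ∉ C` would be adjacent to all of `C`. Moving `v` from its part `B` (with `|B| ≤ |C|`)
into `C` changes the objective by `((|C|+1)^q - |C|^q) - (|B|^q - (|B|-1)^q)`, which is positive
because `x ↦ x^q` is strictly convex for `q = p + 1 > 1`: this contradicts optimality.
-/

open Finset

variable {V : Type*} [Fintype V] [DecidableEq V]

/-- A partition of the vertex set of `G` into (nonempty) cliques. -/
def IsCliquePartition (G : SimpleGraph V) (P : Finset (Finset V)) : Prop :=
  (∀ C ∈ P, G.IsClique (C : Set V)) ∧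
  (∀ C ∈ P, C.Nonempty) ∧
  (∀ v : V, ∃! C, C ∈ P ∧ v ∈ C)

theorem StrictConvexOn.sub_lt_sub_of_lt {s : Set ℝ} {f : ℝ → ℝ} (hf : StrictConvexOn ℝ s f)
    {x y d : ℝ} (hx : x ∈ s) (hyd : y + d ∈ s) (hxy : x < y) (hd : 0 < d) :
    f (x + d) - f x < f (y + d) - f y := by
  have hsub : Set.Icc x (y + d) ⊆ s := hf.1.ordConnected.out hx hyd
  -- both increments are compared with the slope of the secant over `[x, y + d]`
  have h₁ := hf.secant_strict_mono (x := x + d) hx (hsub ⟨by linarith, by linarith⟩) hyd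
    (by linarith) (by linarith) (by linarith)
  have h₂ := hf.secant_strict_mono (y := y) hyd hx (hsub ⟨hxy.le, by linarith⟩)
    (by linarith) (by linarith) hxy
  rw [add_sub_cancel_left] at h₁
  rw [← neg_div_neg_eq, ← neg_div_neg_eq (f y - _), neg_sub, neg_sub, neg_sub, neg_sub,
    show y + d - y = d by ring] at h₂
  exact (div_lt_div_iff_of_pos_right hd).mp (h₁.trans h₂)

theorem Real.rpow_add_rpow_lt_rpow_sub_one_add_rpow_add_one {q b c : ℝ} (hq : 1 < q)
    (hb : 1 ≤ b) (hbc : b ≤ c) : b ^ q + c ^ q < (b - 1) ^ q + (c + 1) ^ q := by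
  have hinc := (strictConvexOn_rpow hq).sub_lt_sub_of_lt (x := b - 1) (y := c) (d := 1)
    (Set.mem_Ici.2 (by linarith)) (Set.mem_Ici.2 (by linarith)) (by linarith) one_pos
  rw [sub_add_cancel] at hinc
  linarith

section

variable {V : Type*} {G : SimpleGraph V} {P : Finset (Finset V)}

theorem IsCliquePartition.eq_of_mem_of_mem (hP : IsCliquePartition G P)
    {A₁ A₂ : Finset V} {w : V} (hA₁ : A₁ ∈ P) (hA₂ : A₂ ∈ P) (hw₁ : w ∈ A₁) (hw₂ : w ∈ A₂) :
    A₁ = A₂ :=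
  (hP.2.2 w).unique ⟨hA₁, hw₁⟩ ⟨hA₂, hw₂⟩

variable [DecidableEq V] {v w : V} {A C : Finset V}

/-- What becomes of the part `A` when the vertex `v` is moved into the part `C`. -/
def moveTo (v : V) (C A : Finset V) : Finset V :=
  if A = C then insert v A else A.erase v

theorem moveTo_subset_insert : moveTo v C A ⊆ insert v A := by
  unfold moveTo; split_ifs
  exacts [subset_rfl, (erase_subset v A).trans (subset_insert v A)]

theorem eq_of_mem_moveTo (h : v ∈ moveTo v C A) : A = C := by
  unfold moveTo at h; split_ifs at h with hAC
  exacts [hAC, absurd h (notMem_erase v A)]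

theorem mem_moveTo_self : v ∈ moveTo v C C := by
  simp [moveTo]

theorem mem_moveTo_of_mem_of_ne (hw : w ∈ A) (hwv : w ≠ v) : w ∈ moveTo v C A := by
  unfold moveTo; split_ifs
  exacts [mem_insert_of_mem hw, mem_erase.2 ⟨hwv, hw⟩]

theorem moveTo_of_notMem (hvA : v ∉ A) (hAC : A ≠ C) : moveTo v C A = A := by
  simp [moveTo, hAC, hvA]

theorem IsCliquePartition.eq_of_mem_moveTo_of_mem_moveTo (hP : IsCliquePartition G P)
    {A₁ A₂ : Finset V} (hA₁ : A₁ ∈ P) (hA₂ : A₂ ∈ P) (hw₁ : w ∈ moveTo v C A₁)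
    (hw₂ : w ∈ moveTo v C A₂) : A₁ = A₂ := by
  obtain rfl | hwv := eq_or_ne w v
  · rw [eq_of_mem_moveTo hw₁, eq_of_mem_moveTo hw₂]
  · exact hP.eq_of_mem_of_mem hA₁ hA₂
      ((mem_insert.1 (moveTo_subset_insert hw₁)).resolve_left hwv)
      ((mem_insert.1 (moveTo_subset_insert hw₂)).resolve_left hwv)

def moveVertex (P : Finset (Finset V)) (v : V) (C : Finset V) : Finset (Finset V) :=
  (P.image (moveTo v C)).filter Finset.Nonempty

theorem mem_moveVertex {A' : Finset V} :
    A' ∈ moveVertex P v C ↔ A'.Nonempty ∧ ∃ A ∈ P, moveTo v C A = A' := by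
  simp [moveVertex, and_comm]

theorem isCliquePartition_moveVertex (hP : IsCliquePartition G P) (hC : C ∈ P)
    (hv : ∀ u ∈ C, v ≠ u → G.Adj v u) : IsCliquePartition G (moveVertex P v C) := by
  refine ⟨?_, fun _ h => (mem_moveVertex.1 h).1, fun w => ?_⟩
  · rintro _ h
    obtain ⟨-, A, hA, rfl⟩ := mem_moveVertex.1 h
    unfold moveTo; split_ifs with hAC
    · subst hAC; simpa using (hP.1 A hA).insert hv
    · exact (hP.1 A hA).subset (by simp)
  · obtain ⟨A, hA, hwA⟩ : ∃ A ∈ P, w ∈ moveTo v C A := by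
      obtain rfl | hwv := eq_or_ne w v
      · exact ⟨C, hC, mem_moveTo_self⟩
      · obtain ⟨A, ⟨hA, hwA⟩, -⟩ := hP.2.2 w
        exact ⟨A, hA, mem_moveTo_of_mem_of_ne hwA hwv⟩
    refine ⟨moveTo v C A, ⟨mem_moveVertex.2 ⟨⟨w, hwA⟩, A, hA, rfl⟩, hwA⟩, ?_⟩
    rintro _ ⟨h, hw⟩
    obtain ⟨-, A', hA', rfl⟩ := mem_moveVertex.1 h
    rw [hP.eq_of_mem_moveTo_of_mem_moveTo hA' hA hw hwA]

theorem IsCliquePartition.sum_moveVertex (hP : IsCliquePartition G P) {φ : ℕ → ℝ}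
    (hφ₀ : φ 0 = 0) :
    ∑ A ∈ moveVertex P v C, φ #A = ∑ A ∈ P, φ #(moveTo v C A) := by
  rw [moveVertex, filter_image, sum_image, sum_filter_of_ne]
  · exact fun A _ hA => nonempty_iff_ne_empty.2 fun h => hA (by simp [h, hφ₀])
  · rintro A₁ hA₁ A₂ hA₂ h
    obtain ⟨hA₁, ⟨w, hw⟩⟩ := mem_filter.1 hA₁
    exact hP.eq_of_mem_moveTo_of_mem_moveTo hA₁ (mem_filter.1 hA₂).1 hw (h ▸ hw)

theorem IsCliquePartition.sum_lt_sum_moveVertex (hP : IsCliquePartition G P) {B : Finset V}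
    (hB : B ∈ P) (hC : C ∈ P) (hvB : v ∈ B) (hvC : v ∉ C) {φ : ℕ → ℝ} (hφ₀ : φ 0 = 0)
    (hφ : φ #B + φ #C < φ (#B - 1) + φ (#C + 1)) :
    ∑ A ∈ P, φ #A < ∑ A ∈ moveVertex P v C, φ #A := by
  have hBC : B ≠ C := by rintro rfl; exact hvC hvB
  have hgain : ∑ A ∈ P, (φ #(moveTo v C A) - φ #A) =
      (φ (#B - 1) - φ #B) + (φ (#C + 1) - φ #C) := by
    rw [sum_eq_add_of_mem B C hB hC hBC]
    · simp [moveTo, hBC, hvB, hvC]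
    · rintro A hA ⟨hAB, hAC⟩
      rw [moveTo_of_notMem (fun hvA => hAB (hP.eq_of_mem_of_mem hA hB hvA hvB)) hAC, sub_self]
  rw [hP.sum_moveVertex hφ₀, ← sub_pos, ← sum_sub_distrib, hgain]
  linarith

theorem IsCliquePartition.eq_of_isClique_of_subset_of_forall_card_le
    (hP : IsCliquePartition G P) {φ : ℕ → ℝ} (hφ₀ : φ 0 = 0) (hφ : ∀ b c, 1 ≤ b → b ≤ c → φ b + φ c < φ (b - 1) + φ (c + 1))
    (hopt : ∀ Q, IsCliquePartition G Q → ∑ A ∈ Q, φ #A ≤ ∑ A ∈ P, φ #A)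
    (hC : C ∈ P) (hCmax : ∀ A ∈ P, #A ≤ #C) {D : Finset V} (hD : G.IsClique (D : Set V))
    (hCD : C ⊆ D) : C = D := by
  by_contra hne
  obtain ⟨v, hvD, hvC⟩ := exists_of_ssubset (hCD.ssubset_of_ne hne)
  have hv : ∀ u ∈ C, v ≠ u → G.Adj v u := fun u hu => hD hvD (hCD hu)
  obtain ⟨B, ⟨hB, hvB⟩, -⟩ := hP.2.2 v
  have hgain := hP.sum_lt_sum_moveVertex hB hC hvB hvC hφ₀
    (hφ _ _ (card_pos.2 ⟨v, hvB⟩) (hCmax B hB))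
  exact (hopt _ (isCliquePartition_moveVertex hP hC hv)).not_gt hgain

end

theorem isCliquePartition_singletons (G : SimpleGraph V) :
    IsCliquePartition G (univ.image ({·})) := by
  refine ⟨?_, ?_, fun v => ⟨{v}, by simp, ?_⟩⟩
  · simp
  · simp
  · simp +contextual [eq_comm]

theorem exists_isCliquePartition_forall_le {β : Type*} [LinearOrder β] (G : SimpleGraph V)
    (f : Finset (Finset V) → β) :
    ∃ P, IsCliquePartition G P ∧ ∀ Q, IsCliquePartition G Q → f Q ≤ f P := by
  classical
  obtain ⟨P, hP, hmax⟩ := (univ.filter (IsCliquePartition G)).exists_max_image f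
    ⟨_, mem_filter.2 ⟨mem_univ _, isCliquePartition_singletons G⟩⟩
  exact ⟨P, (mem_filter.1 hP).2, fun Q hQ => hmax Q (mem_filter.2 ⟨mem_univ _, hQ⟩)⟩

/-- for `p > 0`, among the partitions of the vertex set of a (nonempty) finite
simple graph into cliques maximizing `∑_i |C_i|^{p+1}`, there is one having a part that is a
maximal clique of `G`. -/
theorem exists_optimal_cliquePartition_with_maximalClique
    [Nonempty V] (G : SimpleGraph V) (p : ℝ) (hp : 0 < p) :
    ∃ P : Finset (Finset V), IsCliquePartition G P ∧
      (∀ Q : Finset (Finset V), IsCliquePartition G Q →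
        ∑ C ∈ Q, (C.card : ℝ) ^ (p + 1) ≤ ∑ C ∈ P, (C.card : ℝ) ^ (p + 1)) ∧
      ∃ C ∈ P, G.IsClique (C : Set V) ∧
        ∀ D : Finset V, G.IsClique (D : Set V) → C ⊆ D → C = D := by
  obtain ⟨P, hP, hopt⟩ :=
    exists_isCliquePartition_forall_le G fun P => ∑ C ∈ P, (C.card : ℝ) ^ (p + 1)
  have hPne : P.Nonempty := by
    obtain ⟨C, ⟨hC, -⟩, -⟩ := hP.2.2 (Classical.arbitrary V)
    exact ⟨C, hC⟩
  obtain ⟨C, hC, hCmax⟩ := P.exists_max_image card hPne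
  have hφ₀ : ((0 : ℕ) : ℝ) ^ (p + 1) = 0 := by
    rw [Nat.cast_zero, Real.zero_rpow (by linarith)]
  have hφ (b c : ℕ) (hb : 1 ≤ b) (hbc : b ≤ c) :
      (b : ℝ) ^ (p + 1) + (c : ℝ) ^ (p + 1) <
        ((b - 1 : ℕ) : ℝ) ^ (p + 1) + ((c + 1 : ℕ) : ℝ) ^ (p + 1) := by
    push_cast [Nat.cast_sub hb]
    exact Real.rpow_add_rpow_lt_rpow_sub_one_add_rpow_add_one (by linarith)
      (by exact_mod_cast hb) (by exact_mod_cast hbc)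
  exact ⟨P, hP, hopt, C, hC, hP.1 C hC,
    fun D hD hCD => hP.eq_of_isClique_of_subset_of_forall_card_le hφ₀ hφ hopt hC hCmax hD hCD⟩
end
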